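/- arXiv:2604.27651 — 8 statements merged into one kernel-verified Lean document; each statement's English description precedes it below -/
import Mathlib

section
/- Fix a hyperedge e∈E and let K_e ⊆ ℝ^V be the convex hull of the vectors 𝟙_u − 𝟙_v over all (not necessarily distinct) pairs u,v∈e, where 𝟙_u denotes the u-th standard basis vector of ℝ^V. Then K_e = {η∈U_e : ‖η‖₁ ≤ 2}, and consequently for every x∈ℝ^V the edge range is the support function of K_e: R_e(x) = max_{η∈K_e} ⟨η,x⟩ = max{⟨η,x⟩ : η∈U_e, ‖η‖₁ ≤ 2}. -/
open Finset

section

variable {V : Type*} [Fintype V] [DecidableEq V] [Nonempty V]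
variable {E : Type*} [Fintype E]

/-- The edge range `R_e(x) = max_{u∈e} x_u - min_{v∈e} x_v`. -/
noncomputable def eRange (edge : E → Finset V) (hne : ∀ e, (edge e).Nonempty)
    (x : V → ℝ) (e : E) : ℝ :=
  (edge e).sup' (hne e) x - (edge e).inf' (hne e) x

/-- The ℓ¹ norm on ℝ^V. -/
def l1norm (η : V → ℝ) : ℝ := ∑ v, |η v|

/-- Membership in `U_e`: supported on `e` and zero-sum. -/
def memUe (edge : E → Finset V) (e : E) (η : V → ℝ) : Prop :=
  (∀ v, v ∉ edge e → η v = 0) ∧ ∑ v, η v = 0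

set_option linter.unusedSectionVars false

lemma pair_mem_K (edge : E → Finset V) (e : E) {u v : V} (hu : u ∈ edge e) (hv : v ∈ edge e) :
    memUe edge e (fun t => (if t = u then (1:ℝ) else 0) - (if t = v then (1:ℝ) else 0)) ∧
    l1norm (fun t => (if t = u then (1:ℝ) else 0) - (if t = v then (1:ℝ) else 0)) ≤ 2 := by
  refine ⟨⟨?_, ?_⟩, ?_⟩
  · intro t ht
    have h1 : t ≠ u := fun h => ht (h ▸ hu)
    have h2 : t ≠ v := fun h => ht (h ▸ hv)
    simp [h1, h2]
  · simp [Finset.sum_sub_distrib]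
  · unfold l1norm
    calc ∑ t, |(if t = u then (1:ℝ) else 0) - (if t = v then (1:ℝ) else 0)|
        ≤ ∑ t, (|(if t = u then (1:ℝ) else 0)| + |(if t = v then (1:ℝ) else 0)|) := by
          refine Finset.sum_le_sum fun t _ => ?_
          rw [sub_eq_add_neg]
          exact (abs_add_le _ _).trans (by rw [abs_neg])
      _ = 2 := by
          rw [Finset.sum_add_distrib]
          have : ∀ w : V, ∑ t, |(if t = w then (1:ℝ) else 0)| = 1 := by
            intro w; simp [apply_ite abs]
          rw [this u, this v]; norm_num

lemma K_convex (edge : E → Finset V) (e : E) :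
    Convex ℝ {η : V → ℝ | memUe edge e η ∧ l1norm η ≤ 2} := by
  rintro η₁ ⟨⟨hs1, hz1⟩, hl1⟩ η₂ ⟨⟨hs2, hz2⟩, hl2⟩ a b ha hb hab
  refine ⟨⟨?_, ?_⟩, ?_⟩
  · intro t ht
    simp [hs1 t ht, hs2 t ht]
  · simp only [Pi.add_apply, Pi.smul_apply, smul_eq_mul, Finset.sum_add_distrib,
      ← Finset.mul_sum, hz1, hz2]
    ring
  · unfold l1norm
    calc ∑ t, |(a • η₁ + b • η₂) t| ≤ ∑ t, (a * |η₁ t| + b * |η₂ t|) := by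
          refine Finset.sum_le_sum fun t _ => ?_
          simp only [Pi.add_apply, Pi.smul_apply, smul_eq_mul]
          calc |a * η₁ t + b * η₂ t| ≤ |a * η₁ t| + |b * η₂ t| := abs_add_le _ _
            _ = a * |η₁ t| + b * |η₂ t| := by
                rw [abs_mul, abs_mul, abs_of_nonneg ha, abs_of_nonneg hb]
      _ = a * l1norm η₁ + b * l1norm η₂ := by
          rw [Finset.sum_add_distrib, ← Finset.mul_sum, ← Finset.mul_sum]; rfl
      _ ≤ a * 2 + b * 2 := by gcongr
      _ = 2 := by linarith

lemma sum_pair_eval (A : Finset V) (w : V → V → ℝ) (t : V) :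
    ∑ q ∈ A ×ˢ A, w q.1 q.2 * ((if t = q.1 then (1:ℝ) else 0) - (if t = q.2 then (1:ℝ) else 0))
    = (if t ∈ A then (∑ v ∈ A, w t v) - (∑ u ∈ A, w u t) else 0) := by
  rw [Finset.sum_product]
  simp only [mul_sub, mul_ite, mul_one, mul_zero, Finset.sum_sub_distrib]
  have h1 : (∑ u ∈ A, ∑ v ∈ A, if t = u then w u v else 0)
      = if t ∈ A then ∑ v ∈ A, w t v else 0 := by
    rw [← Finset.sum_ite_eq A t (fun u => ∑ v ∈ A, w u v)]
    refine Finset.sum_congr rfl fun u _ => ?_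
    split <;> simp_all
  have h2 : (∑ u ∈ A, ∑ v ∈ A, if t = v then w u v else 0)
      = if t ∈ A then ∑ u ∈ A, w u t else 0 := by
    rw [Finset.sum_comm, ← Finset.sum_ite_eq A t (fun v => ∑ u ∈ A, w u v)]
    refine Finset.sum_congr rfl fun v _ => ?_
    split <;> simp_all
  rw [h1, h2]
  split <;> simp

lemma K_subset_hull (edge : E → Finset V) (hne : ∀ e, (edge e).Nonempty) (e : E) :
    {η : V → ℝ | memUe edge e η ∧ l1norm η ≤ 2} ⊆
    convexHull ℝ {η : V → ℝ | ∃ u ∈ edge e, ∃ v ∈ edge e,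
        η = fun t => (if t = u then (1 : ℝ) else 0) - (if t = v then (1 : ℝ) else 0)} := by
  rintro η ⟨⟨hsupp, hsum⟩, hl1⟩
  obtain ⟨u₀, hu₀⟩ := hne e
  set p : V → ℝ := fun t => max (η t) 0 with hp
  set n : V → ℝ := fun t => max (-η t) 0 with hn
  have hp0 : ∀ t, 0 ≤ p t := fun t => le_max_right _ _
  have hn0 : ∀ t, 0 ≤ n t := fun t => le_max_right _ _
  have hpn : ∀ t, p t - n t = η t := fun t => max_zero_sub_max_neg_zero_eq_self (η t)
  have habs : ∀ t, p t + n t = |η t| := fun t => max_zero_add_max_neg_zero_eq_abs_self (η t)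
  set s : ℝ := ∑ t, p t with hs
  have hsn : ∑ t, n t = s := by
    have h0 : ∑ t, (p t - n t) = 0 := by rw [Finset.sum_congr rfl fun t _ => hpn t]; exact hsum
    rw [Finset.sum_sub_distrib] at h0
    linarith
  have hs0 : 0 ≤ s := Finset.sum_nonneg fun t _ => hp0 t
  have hs1 : s ≤ 1 := by
    have h2 : ∑ t, (p t + n t) = l1norm η := Finset.sum_congr rfl fun t _ => habs t
    rw [Finset.sum_add_distrib, hsn] at h2
    have : s + s ≤ 2 := by rw [← hs] at h2; linarith [h2, hl1]
    linarith
  have hpe : ∀ t, t ∉ edge e → p t = 0 := by intro t ht; simp [hp, hsupp t ht]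
  have hnE : ∀ t, t ∉ edge e → n t = 0 := by intro t ht; simp [hn, hsupp t ht]
  have hps : ∑ t ∈ edge e, p t = s :=
    Finset.sum_subset (Finset.subset_univ _) fun t _ ht => hpe t ht
  have hns2 : ∑ t ∈ edge e, n t = s := by
    rw [Finset.sum_subset (Finset.subset_univ _) fun t _ ht => hnE t ht]; exact hsn
  by_cases hzero : s = 0
  · have hpt : ∀ t, p t = 0 := fun t =>
      (Finset.sum_eq_zero_iff_of_nonneg fun t _ => hp0 t).1 (hzero ▸ hs.symm) t (mem_univ t)
    have hnt : ∀ t, n t = 0 := fun t =>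
      (Finset.sum_eq_zero_iff_of_nonneg fun t _ => hn0 t).1 (hzero ▸ hsn) t (mem_univ t)
    have hη : η = fun t => (if t = u₀ then (1:ℝ) else 0) - (if t = u₀ then (1:ℝ) else 0) := by
      funext t
      have : η t = 0 := by rw [← hpn t, hpt t, hnt t, sub_zero]
      simp [this]
    exact subset_convexHull ℝ _ ⟨u₀, hu₀, u₀, hu₀, hη⟩
  · have hspos : 0 < s := lt_of_le_of_ne hs0 (Ne.symm hzero)
    set w : V → V → ℝ := fun u v => p u * n v / s + (if u = u₀ ∧ v = u₀ then 1 - s else 0)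
      with hwdef
    have hw0 : ∀ q ∈ (edge e) ×ˢ (edge e), 0 ≤ w q.1 q.2 := by
      intro q _
      have h1 : 0 ≤ p q.1 * n q.2 / s := div_nonneg (mul_nonneg (hp0 _) (hn0 _)) hs0
      have h2 : (0:ℝ) ≤ if q.1 = u₀ ∧ q.2 = u₀ then 1 - s else 0 := by
        split
        · linarith
        · exact le_refl 0
      simp only [hwdef]; linarith
    have hrow : ∀ t, ∑ v ∈ edge e, w t v = p t + (if t = u₀ then 1 - s else 0) := by
      intro t
      simp only [hwdef]
      rw [Finset.sum_add_distrib]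
      congr 1
      · rw [← Finset.sum_div, ← Finset.mul_sum, hns2, mul_div_assoc,
          div_self hzero, mul_one]
      · by_cases ht : t = u₀
        · simp only [ht, true_and]
          rw [Finset.sum_ite_eq' (edge e) u₀ (fun _ => 1 - s)]
          simp [hu₀]
        · simp [ht]
    have hcol : ∀ t, ∑ u ∈ edge e, w u t = n t + (if t = u₀ then 1 - s else 0) := by
      intro t
      simp only [hwdef]
      rw [Finset.sum_add_distrib]
      congr 1
      · rw [← Finset.sum_div, ← Finset.sum_mul, hps, mul_comm, mul_div_assoc,
          div_self hzero, mul_one]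
      · by_cases ht : t = u₀
        · simp only [ht, and_true]
          rw [Finset.sum_ite_eq' (edge e) u₀ (fun _ => 1 - s)]
          simp [hu₀]
        · simp [ht]
    have hwsum : ∑ q ∈ (edge e) ×ˢ (edge e), w q.1 q.2 = 1 := by
      rw [Finset.sum_product]
      rw [Finset.sum_congr rfl fun u _ => hrow u]
      rw [Finset.sum_add_distrib, hps]
      rw [Finset.sum_ite_eq' (edge e) u₀ (fun _ => 1 - s)]
      simp [hu₀]
    have hz : ∀ q ∈ (edge e) ×ˢ (edge e),
        (fun t => (if t = q.1 then (1:ℝ) else 0) - (if t = q.2 then (1:ℝ) else 0)) ∈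
        {η : V → ℝ | ∃ u ∈ edge e, ∃ v ∈ edge e,
          η = fun t => (if t = u then (1 : ℝ) else 0) - (if t = v then (1 : ℝ) else 0)} := by
      intro q hq
      exact ⟨q.1, (Finset.mem_product.1 hq).1, q.2, (Finset.mem_product.1 hq).2, rfl⟩
    have hmem := Finset.centerMass_mem_convexHull ((edge e) ×ˢ (edge e))
      hw0 (by rw [hwsum]; norm_num) hz
    have hcm : ((edge e) ×ˢ (edge e)).centerMass (fun q => w q.1 q.2)
        (fun q => fun t => (if t = q.1 then (1:ℝ) else 0) - (if t = q.2 then (1:ℝ) else 0))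
        = η := by
      rw [Finset.centerMass_eq_of_sum_1 _ _ hwsum]
      funext t
      rw [Finset.sum_apply]
      simp only [Pi.smul_apply, smul_eq_mul]
      rw [sum_pair_eval (edge e) w t]
      by_cases ht : t ∈ edge e
      · rw [if_pos ht, hrow t, hcol t]
        ring_nf
        linarith [hpn t]
      · rw [if_neg ht, hsupp t ht]
    rw [← hcm]
    exact hmem

lemma sum_le_range (edge : E → Finset V) (hne : ∀ e, (edge e).Nonempty) (e : E) (x : V → ℝ)
    (η : V → ℝ) (h1 : memUe edge e η) (h2 : l1norm η ≤ 2) :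
    ∑ t, η t * x t ≤ eRange edge hne x e := by
  obtain ⟨hsupp, hsum⟩ := h1
  set p : V → ℝ := fun t => max (η t) 0 with hp
  set n : V → ℝ := fun t => max (-η t) 0 with hn
  have hp0 : ∀ t, 0 ≤ p t := fun t => le_max_right _ _
  have hn0 : ∀ t, 0 ≤ n t := fun t => le_max_right _ _
  have hpn : ∀ t, p t - n t = η t := fun t => max_zero_sub_max_neg_zero_eq_self (η t)
  have habs : ∀ t, p t + n t = |η t| := fun t => max_zero_add_max_neg_zero_eq_abs_self (η t)
  set s : ℝ := ∑ t, p t with hs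
  have hsn : ∑ t, n t = s := by
    have h0 : ∑ t, (p t - n t) = 0 := by rw [Finset.sum_congr rfl fun t _ => hpn t]; exact hsum
    rw [Finset.sum_sub_distrib] at h0
    linarith
  have hs0 : 0 ≤ s := Finset.sum_nonneg fun t _ => hp0 t
  have hs1 : s ≤ 1 := by
    have hh : ∑ t, (p t + n t) = l1norm η := Finset.sum_congr rfl fun t _ => habs t
    rw [Finset.sum_add_distrib, hsn] at hh
    have : s + s ≤ 2 := by rw [← hs] at hh; linarith [hh, h2]
    linarith
  set M : ℝ := (edge e).sup' (hne e) x with hM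
  set m : ℝ := (edge e).inf' (hne e) x with hm
  have hMm : m ≤ M := by
    obtain ⟨u, hu⟩ := hne e
    exact le_trans (Finset.inf'_le x hu) (Finset.le_sup' x hu)
  have hub : ∑ t, p t * x t ≤ s * M := by
    rw [hs, Finset.sum_mul]
    refine Finset.sum_le_sum fun t _ => ?_
    by_cases ht : t ∈ edge e
    · exact mul_le_mul_of_nonneg_left (Finset.le_sup' x ht) (hp0 t)
    · have : p t = 0 := by simp [hp, hsupp t ht]
      simp [this]
  have hlb : s * m ≤ ∑ t, n t * x t := by
    rw [← hsn, Finset.sum_mul]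
    refine Finset.sum_le_sum fun t _ => ?_
    by_cases ht : t ∈ edge e
    · exact mul_le_mul_of_nonneg_left (Finset.inf'_le x ht) (hn0 t)
    · have : n t = 0 := by simp [hn, hsupp t ht]
      simp [this]
  have hsplit : ∑ t, η t * x t = ∑ t, p t * x t - ∑ t, n t * x t := by
    rw [← Finset.sum_sub_distrib]
    refine Finset.sum_congr rfl fun t _ => ?_
    rw [← sub_mul, hpn t]
  have : ∑ t, η t * x t ≤ s * (M - m) := by rw [hsplit]; nlinarith
  have hfin : s * (M - m) ≤ M - m := by nlinarith
  calc ∑ t, η t * x t ≤ s * (M - m) := this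
    _ ≤ M - m := hfin
    _ = eRange edge hne x e := rfl

theorem stmt0 (edge : E → Finset V) (hne : ∀ e, (edge e).Nonempty) (e : E) :
    convexHull ℝ {η : V → ℝ | ∃ u ∈ edge e, ∃ v ∈ edge e,
        η = fun t => (if t = u then (1 : ℝ) else 0) - (if t = v then (1 : ℝ) else 0)}
      = {η : V → ℝ | memUe edge e η ∧ l1norm η ≤ 2} ∧
    ∀ x : V → ℝ,
      IsGreatest {y : ℝ | ∃ η ∈ convexHull ℝ {η : V → ℝ | ∃ u ∈ edge e, ∃ v ∈ edge e,
          η = fun t => (if t = u then (1 : ℝ) else 0) - (if t = v then (1 : ℝ) else 0)},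
        y = ∑ t, η t * x t} (eRange edge hne x e) ∧
      IsGreatest {y : ℝ | ∃ η : V → ℝ, memUe edge e η ∧ l1norm η ≤ 2 ∧ y = ∑ t, η t * x t}
        (eRange edge hne x e) := by
  have hSK : {η : V → ℝ | ∃ u ∈ edge e, ∃ v ∈ edge e,
      η = fun t => (if t = u then (1 : ℝ) else 0) - (if t = v then (1 : ℝ) else 0)} ⊆
      {η : V → ℝ | memUe edge e η ∧ l1norm η ≤ 2} := by
    rintro η ⟨u, hu, v, hv, rfl⟩
    exact pair_mem_K edge e hu hv
  have heq : convexHull ℝ {η : V → ℝ | ∃ u ∈ edge e, ∃ v ∈ edge e,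
      η = fun t => (if t = u then (1 : ℝ) else 0) - (if t = v then (1 : ℝ) else 0)}
      = {η : V → ℝ | memUe edge e η ∧ l1norm η ≤ 2} :=
    Set.Subset.antisymm (convexHull_min hSK (K_convex edge e)) (K_subset_hull edge hne e)
  refine ⟨heq, fun x => ?_⟩
  have hg2 : IsGreatest {y : ℝ | ∃ η : V → ℝ, memUe edge e η ∧ l1norm η ≤ 2 ∧
      y = ∑ t, η t * x t} (eRange edge hne x e) := by
    constructor
    · obtain ⟨u, hu, hsup⟩ := Finset.exists_mem_eq_sup' (hne e) x
      obtain ⟨v, hv, hinf⟩ := Finset.exists_mem_eq_inf' (hne e) x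
      refine ⟨fun t => (if t = u then (1:ℝ) else 0) - (if t = v then (1:ℝ) else 0),
        (pair_mem_K edge e hu hv).1, (pair_mem_K edge e hu hv).2, ?_⟩
      have hcalc : ∑ t, ((if t = u then (1:ℝ) else 0) - (if t = v then (1:ℝ) else 0)) * x t
          = x u - x v := by
        simp only [sub_mul, ite_mul, one_mul, zero_mul, Finset.sum_sub_distrib]
        rw [Finset.sum_ite_eq' Finset.univ u x, Finset.sum_ite_eq' Finset.univ v x]
        simp
      rw [hcalc, eRange, hsup, hinf]
    · rintro y ⟨η, h1, h2, rfl⟩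
      exact sum_le_range edge hne e x η h1 h2
  have hsets : {y : ℝ | ∃ η ∈ convexHull ℝ {η : V → ℝ | ∃ u ∈ edge e, ∃ v ∈ edge e,
      η = fun t => (if t = u then (1 : ℝ) else 0) - (if t = v then (1 : ℝ) else 0)},
      y = ∑ t, η t * x t}
      = {y : ℝ | ∃ η : V → ℝ, memUe edge e η ∧ l1norm η ≤ 2 ∧ y = ∑ t, η t * x t} := by
    rw [heq]
    ext y
    simp only [Set.mem_setOf_eq]
    tauto
  exact ⟨hsets ▸ hg2, hg2⟩

end
end

section
/- For every hyperedge e∈E and every x∈ℝ^V, (w_e/2)·R_e(x)² = sup_{η∈U_e} ( ⟨η,x⟩ − ‖η‖₁²/(8 w_e) ). Equivalently, the Fenchel conjugate of ψ_e(x) := (w_e/2)·R_e(x)², defined by ψ_e*(η) = sup_{x∈ℝ^V} ( ⟨η,x⟩ − ψ_e(x) ), equals ‖η‖₁²/(8 w_e) when η∈U_e and +∞ when η∉U_e. -/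
open Finset

section

variable {V : Type*} [Fintype V] [DecidableEq V] [Nonempty V]
variable {E : Type*} [Fintype E]

lemma eRange_nonneg (edge : E → Finset V) (hne : ∀ e, (edge e).Nonempty)
    (x : V → ℝ) (e : E) : 0 ≤ eRange edge hne x e := by
  obtain ⟨a, ha⟩ := hne e
  exact sub_nonneg.mpr (le_trans (Finset.inf'_le x ha) (Finset.le_sup' x ha))

lemma l1norm_nonneg (η : V → ℝ) : 0 ≤ l1norm η :=
  Finset.sum_nonneg fun v _ => abs_nonneg _

lemma eRange_const_on (edge : E → Finset V) (hne : ∀ e, (edge e).Nonempty) (e : E)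
    (x : V → ℝ) (c : ℝ) (hc : ∀ z ∈ edge e, x z = c) : eRange edge hne x e = 0 := by
  obtain ⟨a, haa⟩ := hne e
  have hs' : (edge e).sup' (hne e) x = c := by
    apply le_antisymm
    · exact Finset.sup'_le _ _ fun z hz => le_of_eq (hc z hz)
    · calc c = x a := (hc a haa).symm
        _ ≤ _ := Finset.le_sup' x haa
  have hi' : (edge e).inf' (hne e) x = c := by
    apply le_antisymm
    · calc (edge e).inf' (hne e) x ≤ x a := Finset.inf'_le x haa
        _ = c := hc a haa
    · exact Finset.le_inf' _ _ fun z hz => ge_of_eq (hc z hz)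
  rw [eRange, hs', hi']; ring

/-- Key inequality: `⟨η, x⟩ ≤ (‖η‖₁/2) · R_e(x)` for `η ∈ U_e`. -/
lemma key_ineq (edge : E → Finset V) (hne : ∀ e, (edge e).Nonempty) (e : E)
    (x η : V → ℝ) (hη : memUe edge e η) :
    ∑ v, η v * x v ≤ l1norm η / 2 * eRange edge hne x e := by
  set M := (edge e).sup' (hne e) x with hM
  set m := (edge e).inf' (hne e) x with hm
  have hsum : ∑ v, η v * x v = ∑ v, η v * (x v - (M + m) / 2) := by
    rw [Finset.sum_congr rfl (fun v _ => by ring_nf :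
      ∀ v ∈ Finset.univ, η v * (x v - (M + m) / 2) = η v * x v - η v * ((M + m) / 2))]
    rw [Finset.sum_sub_distrib, ← Finset.sum_mul, hη.2, zero_mul, sub_zero]
  rw [hsum]
  have hbound : ∀ v, η v * (x v - (M + m) / 2) ≤ |η v| * ((M - m) / 2) := by
    intro v
    by_cases hv : v ∈ edge e
    · have h1 : x v ≤ M := Finset.le_sup' x hv
      have h2 : m ≤ x v := Finset.inf'_le x hv
      calc η v * (x v - (M + m) / 2) ≤ |η v * (x v - (M + m) / 2)| := le_abs_self _
        _ = |η v| * |x v - (M + m) / 2| := abs_mul _ _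
        _ ≤ |η v| * ((M - m) / 2) := by
            apply mul_le_mul_of_nonneg_left _ (abs_nonneg _)
            rw [abs_le]; constructor <;> linarith
    · rw [hη.1 v hv]; simp
  calc ∑ v, η v * (x v - (M + m) / 2) ≤ ∑ v, |η v| * ((M - m) / 2) :=
        Finset.sum_le_sum fun v _ => hbound v
    _ = l1norm η / 2 * eRange edge hne x e := by
        rw [← Finset.sum_mul, l1norm, eRange]; ring

theorem stmt1 (edge : E → Finset V) (hne : ∀ e, (edge e).Nonempty)
    (w : E → ℝ) (hw : ∀ e, 0 < w e) (e : E) :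
    (∀ x : V → ℝ,
      IsLUB {c : ℝ | ∃ η : V → ℝ, memUe edge e η ∧
          c = (∑ v, η v * x v) - (l1norm η) ^ 2 / (8 * w e)}
        (w e / 2 * (eRange edge hne x e) ^ 2)) ∧
    (∀ η : V → ℝ, memUe edge e η →
      IsLUB {c : ℝ | ∃ x : V → ℝ,
          c = (∑ v, η v * x v) - w e / 2 * (eRange edge hne x e) ^ 2}
        ((l1norm η) ^ 2 / (8 * w e))) ∧
    (∀ η : V → ℝ, ¬ memUe edge e η →
      ¬ BddAbove {c : ℝ | ∃ x : V → ℝ,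
          c = (∑ v, η v * x v) - w e / 2 * (eRange edge hne x e) ^ 2}) := by
  have hwe := hw e
  refine ⟨?_, ?_, ?_⟩
  · -- Part 1
    intro x
    set R := eRange edge hne x e with hR
    have hR0 : 0 ≤ R := eRange_nonneg edge hne x e
    constructor
    · rintro c ⟨η, hη, rfl⟩
      have h1 := key_ineq edge hne e x η hη
      have ht := l1norm_nonneg η
      set t := l1norm η
      have h2 : ∑ v, η v * x v - t ^ 2 / (8 * w e) ≤ t / 2 * R - t ^ 2 / (8 * w e) := by
        linarith
      have h3 : t / 2 * R - t ^ 2 / (8 * w e) ≤ w e / 2 * R ^ 2 := by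
        have hid : w e / 2 * R ^ 2 - (t / 2 * R - t ^ 2 / (8 * w e))
            = (2 * w e * R - t) ^ 2 / (8 * w e) := by
          field_simp; ring
        have hge : 0 ≤ (2 * w e * R - t) ^ 2 / (8 * w e) := by positivity
        linarith
      linarith
    · -- least upper bound: witness achieves the value
      intro b hb
      by_cases hR0' : R = 0
      · have h0 : (0:ℝ) ∈ {c : ℝ | ∃ η : V → ℝ, memUe edge e η ∧
            c = (∑ v, η v * x v) - (l1norm η) ^ 2 / (8 * w e)} := by
          refine ⟨0, ⟨fun v _ => rfl, by simp⟩, ?_⟩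
          simp [l1norm]
        have := hb h0
        rw [hR0']; simpa using this
      · obtain ⟨u, hu, hux⟩ := Finset.exists_mem_eq_sup' (hne e) x
        obtain ⟨v0, hv0, hvx⟩ := Finset.exists_mem_eq_inf' (hne e) x
        have hxuv : x u - x v0 = R := by rw [hR, eRange, hux, hvx]
        have hRpos : 0 < R := lt_of_le_of_ne hR0 (Ne.symm hR0')
        have huv : u ≠ v0 := by
          intro h; rw [h] at hxuv; simp at hxuv; rw [← hxuv] at hRpos; linarith
        set a := w e * R with ha
        have hapos : 0 < a := by positivity
        set η0 : V → ℝ := fun z => (if z = u then a else 0) - (if z = v0 then a else 0)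
          with hη0
        have hmem : memUe edge e η0 := by
          constructor
          · intro z hz
            have h1 : z ≠ u := fun h => hz (h ▸ hu)
            have h2 : z ≠ v0 := fun h => hz (h ▸ hv0)
            simp [hη0, h1, h2]
          · simp [hη0, Finset.sum_sub_distrib]
        have hinner : ∑ v, η0 v * x v = a * (x u - x v0) := by
          have hterm : ∀ z, η0 z * x z
              = (if z = u then a * x z else 0) - (if z = v0 then a * x z else 0) := by
            intro z
            by_cases h1 : z = u <;> by_cases h2 : z = v0
            · exact absurd (h1.symm.trans h2) huv
            all_goals simp [hη0, h1, h2, huv, Ne.symm huv] <;> ring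
          rw [Finset.sum_congr rfl (fun z _ => hterm z), Finset.sum_sub_distrib,
            Finset.sum_ite_eq' Finset.univ u (fun z => a * x z),
            Finset.sum_ite_eq' Finset.univ v0 (fun z => a * x z)]
          simp; ring
        have hl1 : l1norm η0 = 2 * a := by
          rw [l1norm]
          have habs : ∀ z, |η0 z| = (if z = u then a else 0) + (if z = v0 then a else 0) := by
            intro z
            by_cases h1 : z = u <;> by_cases h2 : z = v0
            · exact absurd (h1 ▸ h2) huv
            · simp [hη0, h1, h2, huv, (Ne.symm huv), abs_of_pos hapos]
            · simp [hη0, h1, h2, huv, (Ne.symm huv), abs_of_pos hapos]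
            · simp [hη0, h1, h2]
          rw [Finset.sum_congr rfl (fun z _ => habs z)]
          simp [Finset.sum_add_distrib]; ring
        have hval : (w e / 2 * R ^ 2) ∈ {c : ℝ | ∃ η : V → ℝ, memUe edge e η ∧
            c = (∑ v, η v * x v) - (l1norm η) ^ 2 / (8 * w e)} := by
          refine ⟨η0, hmem, ?_⟩
          rw [hinner, hxuv, hl1, ha]
          field_simp
          ring
        exact hb hval
  · -- Part 2
    intro η hη
    have ht := l1norm_nonneg η
    set t := l1norm η with htdef
    constructor
    · rintro c ⟨x, rfl⟩
      have h1 := key_ineq edge hne e x η hη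
      set R := eRange edge hne x e
      have hR0 : 0 ≤ R := eRange_nonneg edge hne x e
      have h3 : t / 2 * R - w e / 2 * R ^ 2 ≤ t ^ 2 / (8 * w e) := by
        have hid : t ^ 2 / (8 * w e) - (t / 2 * R - w e / 2 * R ^ 2)
            = (t - 2 * w e * R) ^ 2 / (8 * w e) := by
          field_simp; ring
        have hge : 0 ≤ (t - 2 * w e * R) ^ 2 / (8 * w e) := by positivity
        linarith
      linarith
    · intro b hb
      by_cases ht0 : t = 0
      · -- η = 0
        have hmem : (0:ℝ) ∈ {c : ℝ | ∃ x : V → ℝ,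
            c = (∑ v, η v * x v) - w e / 2 * (eRange edge hne x e) ^ 2} := by
          refine ⟨0, ?_⟩
          have hη0 : ∀ v, η v = 0 := by
            intro v
            have := Finset.sum_eq_zero_iff_of_nonneg (fun v _ => abs_nonneg (η v)) |>.mp ht0
            simpa using abs_eq_zero.mp (this v (Finset.mem_univ v))
          have hrange : eRange edge hne (0 : V → ℝ) e = 0 :=
            eRange_const_on edge hne e 0 0 (fun z _ => rfl)
          simp [hη0, hrange]
        have := hb hmem
        rw [ht0]; simpa using this
      · have htpos : 0 < t := lt_of_le_of_ne ht (Ne.symm ht0)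
        -- there exist positive and negative entries
        have hex : ∃ v, η v ≠ 0 := by
          by_contra h
          push_neg at h
          apply ht0
          rw [htdef, l1norm]
          exact Finset.sum_eq_zero fun v _ => by rw [h v, abs_zero]
        have hpos : ∃ u, 0 < η u := by
          by_contra h
          push_neg at h
          obtain ⟨v1, hv1⟩ := hex
          have hall : ∀ v ∈ Finset.univ, η v = 0 := by
            intro v _
            by_contra hv
            have hneg : η v < 0 := lt_of_le_of_ne (h v) hv
            have hsum : ∑ z, η z < 0 := by
              apply Finset.sum_neg' (fun z _ => h z) ⟨v, Finset.mem_univ v, hneg⟩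
            rw [hη.2] at hsum; exact lt_irrefl 0 hsum
          exact hv1 (hall v1 (Finset.mem_univ v1))
        have hneg : ∃ u, η u < 0 := by
          by_contra h
          push_neg at h
          obtain ⟨v1, hv1⟩ := hex
          have hv1pos : 0 < η v1 := lt_of_le_of_ne (h v1) (Ne.symm hv1)
          have hsum : 0 < ∑ z, η z :=
            Finset.sum_pos' (fun z _ => h z) ⟨v1, Finset.mem_univ v1, hv1pos⟩
          rw [hη.2] at hsum; exact lt_irrefl 0 hsum
        obtain ⟨u, hu⟩ := hpos
        obtain ⟨v0, hv0⟩ := hneg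
        have hue : u ∈ edge e := by
          by_contra h; rw [hη.1 u h] at hu; exact lt_irrefl 0 hu
        have hv0e : v0 ∈ edge e := by
          by_contra h; rw [hη.1 v0 h] at hv0; exact lt_irrefl 0 hv0
        set s := t / (4 * w e) with hs
        have hspos : 0 < s := by positivity
        set x : V → ℝ := fun z => if 0 < η z then s else if η z < 0 then -s else 0 with hx
        have hterm : ∀ z, η z * x z = s * |η z| := by
          intro z
          rcases lt_trichotomy (η z) 0 with h | h | h
          · simp [hx, h, not_lt.mpr (le_of_lt h), abs_of_neg h]; ring
          · simp [hx, h]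
          · simp [hx, h, abs_of_pos h]; ring
        have hinner : ∑ v, η v * x v = s * t := by
          rw [Finset.sum_congr rfl (fun z _ => hterm z), ← Finset.mul_sum, htdef, l1norm]
        have hsup : (edge e).sup' (hne e) x = s := by
          apply le_antisymm
          · apply Finset.sup'_le
            intro z _
            rcases lt_trichotomy (η z) 0 with h | h | h
            · simp [hx, h, not_lt.mpr (le_of_lt h)]; linarith
            · simp [hx, h]; linarith
            · simp [hx, h]
          · have : x u = s := by simp [hx, hu]
            calc s = x u := this.symm
              _ ≤ _ := Finset.le_sup' x hue
        have hinf : (edge e).inf' (hne e) x = -s := by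
          apply le_antisymm
          · have : x v0 = -s := by simp [hx, hv0, not_lt.mpr (le_of_lt hv0)]
            calc (edge e).inf' (hne e) x ≤ x v0 := Finset.inf'_le x hv0e
              _ = -s := this
          · apply Finset.le_inf'
            intro z _
            rcases lt_trichotomy (η z) 0 with h | h | h
            · simp [hx, h, not_lt.mpr (le_of_lt h)]
            · simp [hx, h]; linarith
            · simp [hx, h]; linarith
        have hrange : eRange edge hne x e = 2 * s := by
          rw [eRange, hsup, hinf]; ring
        have hval : (t ^ 2 / (8 * w e)) ∈ {c : ℝ | ∃ x : V → ℝ,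
            c = (∑ v, η v * x v) - w e / 2 * (eRange edge hne x e) ^ 2} := by
          refine ⟨x, ?_⟩
          rw [hinner, hrange, hs]
          field_simp
          ring
        exact hb hval
  · -- Part 3
    intro η hη hbdd
    obtain ⟨b, hb⟩ := hbdd
    rw [memUe, not_and_or] at hη
    by_cases hsum : ∑ v, η v = 0
    · have hsupp : ∃ v, v ∉ edge e ∧ η v ≠ 0 := by
        rcases hη with h | h
        · push_neg at h; exact h
        · exact absurd hsum h
      obtain ⟨v0, hv0e, hv0⟩ := hsupp
      set c := (b + 1) / η v0 with hc
      set x : V → ℝ := fun z => if z = v0 then c else 0 with hx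
      have hinner : ∑ v, η v * x v = b + 1 := by
        have : ∀ z, η z * x z = if z = v0 then η v0 * c else 0 := by
          intro z; by_cases h : z = v0 <;> simp [hx, h]
        rw [Finset.sum_congr rfl (fun z _ => this z)]
        rw [Finset.sum_ite_eq' Finset.univ v0 (fun _ => η v0 * c)]
        simp only [Finset.mem_univ, if_true, hc]
        field_simp
      have hrange : eRange edge hne x e = 0 := by
        apply eRange_const_on edge hne e x 0
        intro z hz
        have : z ≠ v0 := fun h => hv0e (h ▸ hz)
        simp [hx, this]
      have hmem : (b + 1) ∈ {c : ℝ | ∃ x : V → ℝ,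
          c = (∑ v, η v * x v) - w e / 2 * (eRange edge hne x e) ^ 2} := by
        refine ⟨x, ?_⟩
        rw [hinner, hrange]; ring
      linarith [hb hmem]
    · set c := (b + 1) / (∑ v, η v) with hc
      set x : V → ℝ := fun _ => c with hx
      have hinner : ∑ v, η v * x v = b + 1 := by
        simp only [hx, ← Finset.sum_mul]
        rw [hc]; field_simp
      have hrange : eRange edge hne x e = 0 :=
        eRange_const_on edge hne e x c (fun z _ => rfl)
      have hmem : (b + 1) ∈ {c : ℝ | ∃ x : V → ℝ,
          c = (∑ v, η v * x v) - w e / 2 * (eRange edge hne x e) ^ 2} := by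
        refine ⟨x, ?_⟩
        rw [hinner, hrange]; ring
      linarith [hb hmem]

end
end

section
/- If H is connected, then the image of the aggregation map B equals the zero-sum hyperplane: B(𝓨) = {z∈ℝ^V : ∑_{v∈V} z_v = 0}. In particular, for every s∈ℝ^V with ∑_{v∈V} s_v = 0, the affine set {η∈𝓨 : Bη = s} is nonempty. -/
open Finset

section

variable {V : Type*} [Fintype V] [DecidableEq V] [Nonempty V]
variable {E : Type*} [Fintype E]

/-- Membership in `𝓨 = ∏_e U_e`. -/
def memY (edge : E → Finset V) (η : E → V → ℝ) : Prop := ∀ e, memUe edge e (η e)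

/-- The aggregation map `Bη = ∑_e η_e`. -/
def Bmap (η : E → V → ℝ) : V → ℝ := fun v => ∑ e, η e v

/-- Connectivity of the hypergraph: any two vertices are joined by a hyperedge path. -/
def HConn (edge : E → Finset V) : Prop :=
  ∀ u v : V, ∃ (k : ℕ) (p : Fin (k + 1) → V) (c : Fin k → E),
    p 0 = u ∧ p (Fin.last k) = v ∧
    ∀ i : Fin k, p i.castSucc ∈ edge (c i) ∧ p i.succ ∈ edge (c i)

/-- A dipole `δ_u - δ_v`. -/
def dip (u v : V) : V → ℝ := fun x => (if x = u then 1 else 0) - (if x = v then 1 else 0)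

/-- `δ_u - δ_v` is achievable by some `η ∈ 𝓨`. -/
def Ach (edge : E → Finset V) (u v : V) : Prop :=
  ∃ η : E → V → ℝ, memY edge η ∧ Bmap η = dip u v

lemma ach_refl (edge : E → Finset V) (u : V) : Ach edge u u := by
  refine ⟨0, fun e => ⟨fun v _ => rfl, by simp⟩, ?_⟩
  funext x
  simp [Bmap, dip]

lemma ach_step (edge : E → Finset V) {u v : V} {e : E}
    (hu : u ∈ edge e) (hv : v ∈ edge e) : Ach edge u v := by
  classical
  refine ⟨fun e' => if e' = e then dip u v else 0, fun e' => ?_, ?_⟩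
  · by_cases h : e' = e
    · subst h
      refine ⟨fun x hx => ?_, ?_⟩
      · have hxu : x ≠ u := fun h => hx (h ▸ hu)
        have hxv : x ≠ v := fun h => hx (h ▸ hv)
        simp [dip, hxu, hxv]
      · simp [dip, Finset.sum_sub_distrib]
    · exact ⟨fun x _ => by simp [h], by simp [h]⟩
  · funext x
    simp [Bmap, apply_ite (fun f : V → ℝ => f x), Finset.sum_ite_eq']

lemma ach_trans (edge : E → Finset V) {u v w : V}
    (h1 : Ach edge u v) (h2 : Ach edge v w) : Ach edge u w := by
  obtain ⟨η1, hm1, hb1⟩ := h1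
  obtain ⟨η2, hm2, hb2⟩ := h2
  refine ⟨fun e x => η1 e x + η2 e x, fun e => ?_, ?_⟩
  · exact ⟨fun x hx => by show η1 e x + η2 e x = 0; rw [(hm1 e).1 x hx, (hm2 e).1 x hx]; ring,
      by rw [Finset.sum_add_distrib, (hm1 e).2, (hm2 e).2]; ring⟩
  · funext x
    have e1 := congrFun hb1 x
    have e2 := congrFun hb2 x
    simp only [Bmap, dip] at e1 e2 ⊢
    rw [Finset.sum_add_distrib, e1, e2]
    ring

lemma ach_of_conn (edge : E → Finset V) (hconn : HConn edge) (u v : V) :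
    Ach edge u v := by
  obtain ⟨k, p, c, hp0, hpl, hstep⟩ := hconn u v
  have key : ∀ i : Fin (k + 1), Ach edge (p 0) (p i) := by
    intro i
    induction i using Fin.induction with
    | zero => exact ach_refl edge _
    | succ i ih =>
        exact ach_trans edge ih (ach_step edge (hstep i).1 (hstep i).2)
  have := key (Fin.last k)
  rwa [hp0, hpl] at this

theorem stmt2 (edge : E → Finset V) (hne : ∀ e, (edge e).Nonempty)
    (w : E → ℝ) (hw : ∀ e, 0 < w e) (hconn : HConn edge) :
    Bmap '' {η : E → V → ℝ | memY edge η} = {z : V → ℝ | ∑ v, z v = 0} ∧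
    ∀ s : V → ℝ, ∑ v, s v = 0 → ∃ η : E → V → ℝ, memY edge η ∧ Bmap η = s := by
  classical
  have main : ∀ s : V → ℝ, ∑ v, s v = 0 →
      ∃ η : E → V → ℝ, memY edge η ∧ Bmap η = s := by
    intro s hs
    obtain ⟨v0⟩ := ‹Nonempty V›
    choose F hFmem hFb using fun v => ach_of_conn edge hconn v v0
    refine ⟨fun e x => ∑ v, s v * F v e x, fun e => ?_, ?_⟩
    · constructor
      · intro x hx
        exact Finset.sum_eq_zero fun v _ => by rw [(hFmem v e).1 x hx, mul_zero]
      · rw [Finset.sum_comm]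
        exact Finset.sum_eq_zero fun v _ => by
          rw [← Finset.mul_sum, (hFmem v e).2, mul_zero]
    · funext x
      simp only [Bmap]
      rw [Finset.sum_comm]
      have : ∀ v : V, ∑ e, s v * F v e x = s v * dip v v0 x := by
        intro v
        rw [← Finset.mul_sum]
        congr 1
        exact congrFun (hFb v) x
      rw [Finset.sum_congr rfl fun v _ => this v]
      simp only [dip, mul_sub]
      rw [Finset.sum_sub_distrib]
      have h1 : ∑ v, s v * (if x = v then (1:ℝ) else 0) = s x := by
        simp [mul_ite, Finset.sum_ite_eq]
      have h2 : ∑ v, s v * (if x = v0 then (1:ℝ) else 0) = 0 := by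
        rw [← Finset.sum_mul, hs, zero_mul]
      rw [h1, h2, sub_zero]
  refine ⟨Set.ext fun z => ⟨?_, fun hz => ?_⟩, main⟩
  · rintro ⟨η, hη, rfl⟩
    simp only [Set.mem_setOf_eq, Bmap]
    rw [Finset.sum_comm]
    exact Finset.sum_eq_zero fun e _ => (hη e).2
  · obtain ⟨η, hη, hb⟩ := main z hz
    exact ⟨η, hη, hb⟩

end
end

section
/- Let nonnegative reals p_{ev}, n_{ev} (indexed by incidences v∈e) and μ∈ℝ^E with μ_e ≥ 0 satisfy ∑_{e∋v}(p_{ev}−n_{ev}) = s_v for every v∈V, ∑_{v∈e}p_{ev} = μ_e for every e∈E, and ∑_{v∈e}n_{ev} = μ_e for every e∈E. Define η_e∈ℝ^V by (η_e)_v = p_{ev}−n_{ev} for v∈e and (η_e)_v = 0 for v∉e. Then η_e∈U_e for every e∈E, Bη = s, and 𝓓(η) ≤ ∑_{e∈E} μ_e²/(2 w_e). -/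
open Finset

section

variable {V : Type*} [Fintype V] [DecidableEq V] [Nonempty V]
variable {E : Type*} [Fintype E]

/-- The dual objective `𝓓(η) = ∑_e ‖η_e‖₁²/(8 w_e)`. -/
noncomputable def Dobj (w : E → ℝ) (η : E → V → ℝ) : ℝ :=
  ∑ e, (l1norm (η e)) ^ 2 / (8 * w e)

theorem stmt4 (edge : E → Finset V) (hne : ∀ e, (edge e).Nonempty)
    (w : E → ℝ) (hw : ∀ e, 0 < w e) (s : V → ℝ)
    (p n : E → V → ℝ) (μ : E → ℝ)
    (hp : ∀ e, ∀ v ∈ edge e, 0 ≤ p e v)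
    (hn : ∀ e, ∀ v ∈ edge e, 0 ≤ n e v)
    (hμ : ∀ e, 0 ≤ μ e)
    (hvert : ∀ v, ∑ e ∈ univ.filter (fun e => v ∈ edge e), (p e v - n e v) = s v)
    (hpe : ∀ e, ∑ v ∈ edge e, p e v = μ e)
    (hnE : ∀ e, ∑ v ∈ edge e, n e v = μ e) :
    (∀ e, memUe edge e (fun v => if v ∈ edge e then p e v - n e v else 0)) ∧
    Bmap (fun e v => if v ∈ edge e then p e v - n e v else 0) = s ∧
    Dobj w (fun e v => if v ∈ edge e then p e v - n e v else 0)
      ≤ ∑ e, (μ e) ^ 2 / (2 * w e) := by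
  refine ⟨?_, ?_, ?_⟩
  · intro e
    constructor
    · intro v hv; simp [hv]
    · rw [← Finset.sum_subset (Finset.subset_univ (edge e)) (by intro v _ hv; simp [hv])]
      rw [show (∑ v ∈ edge e, if v ∈ edge e then p e v - n e v else 0)
          = ∑ v ∈ edge e, (p e v - n e v) from
        Finset.sum_congr rfl (fun v hv => by simp [hv]), Finset.sum_sub_distrib,
        hpe e, hnE e, sub_self]
  · funext v
    rw [Bmap, ← hvert v, ← Finset.sum_filter]
  · rw [Dobj]
    apply Finset.sum_le_sum
    intro e _
    have hl1 : l1norm (fun v => if v ∈ edge e then p e v - n e v else 0) ≤ 2 * μ e := by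
      rw [l1norm, ← Finset.sum_subset (Finset.subset_univ (edge e))
        (by intro v _ hv; simp [hv])]
      calc ∑ v ∈ edge e, |if v ∈ edge e then p e v - n e v else 0|
          ≤ ∑ v ∈ edge e, (p e v + n e v) := by
            apply Finset.sum_le_sum; intro v hv
            simp only [hv, if_true]
            calc |p e v - n e v| ≤ |p e v| + |n e v| := abs_sub _ _
              _ = p e v + n e v := by
                rw [abs_of_nonneg (hp e v hv), abs_of_nonneg (hn e v hv)]
        _ = 2 * μ e := by rw [Finset.sum_add_distrib, hpe e, hnE e]; ring
    have h0 : 0 ≤ l1norm (fun v => if v ∈ edge e then p e v - n e v else 0) :=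
      Finset.sum_nonneg fun v _ => abs_nonneg _
    have hsq : (l1norm (fun v => if v ∈ edge e then p e v - n e v else 0)) ^ 2
        ≤ (2 * μ e) ^ 2 := by
      apply pow_le_pow_left₀ h0 hl1
    calc (l1norm (fun v => if v ∈ edge e then p e v - n e v else 0)) ^ 2 / (8 * w e)
        ≤ (2 * μ e) ^ 2 / (8 * w e) :=
          div_le_div_of_nonneg_right hsq (by have := hw e; positivity)
      _ = μ e ^ 2 / (2 * w e) := by
          have := (hw e).ne'
          field_simp
          ring

end
end

section
/- Let η∈𝓨 satisfy Bη = s. Define p_{ev} = max((η_e)_v, 0) and n_{ev} = max(−(η_e)_v, 0) for each incidence v∈e, and μ_e = (1/2)‖η_e‖₁ for each e∈E. Then (p,n,μ) satisfies all the lifted-flow constraints — p_{ev}, n_{ev}, μ_e ≥ 0, ∑_{e∋v}(p_{ev}−n_{ev}) = s_v for every v∈V, and ∑_{v∈e}p_{ev} = μ_e = ∑_{v∈e}n_{ev} for every e∈E — and ∑_{e∈E} μ_e²/(2 w_e) = 𝓓(η). Consequently, the infimum of ∑_{e∈E} μ_e²/(2 w_e) over all (p,n,μ) satisfying the lifted-flow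 constraints equals the dual optimum 𝓓* = inf{𝓓(η) : η∈𝓨, Bη = s}. -/
open Finset

section

variable {V : Type*} [Fintype V] [DecidableEq V] [Nonempty V]
variable {E : Type*} [Fintype E]

/-- The lifted-flow constraints for `(p, n, μ)` with demand `s`. -/
def LiftedFeas (edge : E → Finset V) (s : V → ℝ)
    (p n : E → V → ℝ) (μ : E → ℝ) : Prop :=
  (∀ e, ∀ v ∈ edge e, 0 ≤ p e v) ∧ (∀ e, ∀ v ∈ edge e, 0 ≤ n e v) ∧ (∀ e, 0 ≤ μ e) ∧
  (∀ v, ∑ e ∈ univ.filter (fun e => v ∈ edge e), (p e v - n e v) = s v) ∧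
  (∀ e, ∑ v ∈ edge e, p e v = μ e) ∧ (∀ e, ∑ v ∈ edge e, n e v = μ e)

lemma l1_eq_sum_on {A : Finset V} {f : V → ℝ} (h0 : ∀ v ∉ A, f v = 0) :
    l1norm f = ∑ v ∈ A, |f v| := by
  rw [l1norm]
  exact (Finset.sum_subset (Finset.subset_univ A)
    (fun v _ hv => by rw [h0 v hv, abs_zero])).symm

lemma half_l1 {A : Finset V} {f : V → ℝ} (h0 : ∀ v ∉ A, f v = 0) (hs : ∑ v, f v = 0) :
    ∑ v ∈ A, max (f v) 0 = (1 / 2) * l1norm f ∧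
    ∑ v ∈ A, max (-(f v)) 0 = (1 / 2) * l1norm f := by
  have hA : ∑ v ∈ A, f v = 0 := by
    rw [← hs]
    exact Finset.sum_subset (Finset.subset_univ A) (fun v _ hv => h0 v hv)
  have hl1 : l1norm f = ∑ v ∈ A, |f v| := l1_eq_sum_on h0
  have h1 : ∑ v ∈ A, max (f v) 0 - ∑ v ∈ A, max (-(f v)) 0 = 0 := by
    rw [← Finset.sum_sub_distrib]
    rw [show ∑ v ∈ A, (max (f v) 0 - max (-(f v)) 0) = ∑ v ∈ A, f v from ?_, hA]
    apply Finset.sum_congr rfl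
    intro v _
    rcases le_total (f v) 0 with h | h
    · rw [max_eq_right h, max_eq_left (by linarith)]; ring
    · rw [max_eq_left h, max_eq_right (by linarith)]; ring
  have h2 : ∑ v ∈ A, max (f v) 0 + ∑ v ∈ A, max (-(f v)) 0 = l1norm f := by
    rw [hl1, ← Finset.sum_add_distrib]
    apply Finset.sum_congr rfl
    intro v _
    show max (f v) 0 + max (-(f v)) 0 = |f v|
    rcases le_total (f v) 0 with h | h
    · rw [max_eq_right h, max_eq_left (by linarith), abs_of_nonpos h]; ring
    · rw [max_eq_left h, max_eq_right (by linarith), abs_of_nonneg h]; ring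
  constructor <;> linarith

theorem stmt5 (edge : E → Finset V) (hne : ∀ e, (edge e).Nonempty)
    (w : E → ℝ) (hw : ∀ e, 0 < w e) (s : V → ℝ)
    (η : E → V → ℝ) (hη : memY edge η) (hB : Bmap η = s) :
    LiftedFeas edge s (fun e v => max (η e v) 0) (fun e v => max (-(η e v)) 0)
      (fun e => (1 / 2) * l1norm (η e)) ∧
    ∑ e, ((1 / 2) * l1norm (η e)) ^ 2 / (2 * w e) = Dobj w η ∧
    sInf {c : ℝ | ∃ p n : E → V → ℝ, ∃ μ : E → ℝ,
        LiftedFeas edge s p n μ ∧ c = ∑ e, (μ e) ^ 2 / (2 * w e)}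
      = sInf {c : ℝ | ∃ η' : E → V → ℝ, memY edge η' ∧ Bmap η' = s ∧ c = Dobj w η'} := by
  -- generic feasibility construction
  have key : ∀ (η' : E → V → ℝ), memY edge η' → Bmap η' = s →
      LiftedFeas edge s (fun e v => max (η' e v) 0) (fun e v => max (-(η' e v)) 0)
        (fun e => (1 / 2) * l1norm (η' e)) := by
    intro η' hη' hB'
    refine ⟨fun e v _ => le_max_right _ _, fun e v _ => le_max_right _ _, ?_, ?_, ?_, ?_⟩
    · intro e
      have : 0 ≤ l1norm (η' e) :=
        Finset.sum_nonneg (fun v _ => abs_nonneg _)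
      positivity
    · intro v
      have : ∀ e, max (η' e v) 0 - max (-(η' e v)) 0 = η' e v := by
        intro e
        rcases le_total (η' e v) 0 with h | h
        · rw [max_eq_right h, max_eq_left (by linarith)]; ring
        · rw [max_eq_left h, max_eq_right (by linarith)]; ring
      calc ∑ e ∈ univ.filter (fun e => v ∈ edge e), (max (η' e v) 0 - max (-(η' e v)) 0)
          = ∑ e ∈ univ.filter (fun e => v ∈ edge e), η' e v :=
            Finset.sum_congr rfl (fun e _ => this e)
        _ = ∑ e, η' e v := by
            apply Finset.sum_subset (Finset.filter_subset _ _)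
            intro e _ he
            simp only [Finset.mem_filter, Finset.mem_univ, true_and] at he
            exact (hη' e).1 v he
        _ = s v := by rw [← hB']; rfl
    · exact fun e => (half_l1 (hη' e).1 (hη' e).2).1
    · exact fun e => (half_l1 (hη' e).1 (hη' e).2).2
  have feas := key η hη hB
  -- objective equality
  have obj : ∀ (η' : E → V → ℝ),
      ∑ e, ((1 / 2) * l1norm (η' e)) ^ 2 / (2 * w e) = Dobj w η' := by
    intro η'
    unfold Dobj
    exact Finset.sum_congr rfl (fun e _ => by ring)
  refine ⟨feas, obj η, ?_⟩
  set S1 : Set ℝ := {c : ℝ | ∃ p n : E → V → ℝ, ∃ μ : E → ℝ,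
      LiftedFeas edge s p n μ ∧ c = ∑ e, (μ e) ^ 2 / (2 * w e)} with hS1
  set S2 : Set ℝ := {c : ℝ | ∃ η' : E → V → ℝ, memY edge η' ∧ Bmap η' = s ∧ c = Dobj w η'} with hS2
  have hS2sub : S2 ⊆ S1 := by
    rintro c ⟨η', hmem, hB', rfl⟩
    exact ⟨_, _, _, key η' hmem hB', (obj η').symm⟩
  have hS2ne : S2.Nonempty := ⟨Dobj w η, η, hη, hB, rfl⟩
  have hS1ne : S1.Nonempty := hS2ne.mono hS2sub
  have hbd1 : BddBelow S1 := by
    refine ⟨0, ?_⟩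
    rintro c ⟨p, n, μ, _, rfl⟩
    exact Finset.sum_nonneg fun e _ => div_nonneg (sq_nonneg _) (by linarith [hw e])
  have hbd2 : BddBelow S2 := hbd1.mono hS2sub
  apply le_antisymm
  · exact csInf_le_csInf hbd1 hS2ne hS2sub
  · apply le_csInf hS1ne
    rintro c ⟨p, n, μ, ⟨hp, hn, hμ, hv, hpe, hne'⟩, rfl⟩
    -- build a dual candidate from (p, n, μ)
    set η' : E → V → ℝ := fun e v => if v ∈ edge e then p e v - n e v else 0 with hη'
    have hmem : memY edge η' := by
      intro e
      constructor
      · intro v hv; simp [hη', hv]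
      · have : ∑ v, η' e v = ∑ v ∈ edge e, (p e v - n e v) := by
          rw [Finset.sum_ite_mem, Finset.univ_inter]
        rw [this, Finset.sum_sub_distrib, hpe e, hne' e, sub_self]
    have hB' : Bmap η' = s := by
      funext v
      rw [← hv v, Bmap]
      rw [← Finset.sum_filter_add_sum_filter_not univ (fun e => v ∈ edge e) (fun e => η' e v)]
      have h2 : ∑ e ∈ univ.filter (fun e => ¬ v ∈ edge e), η' e v = 0 := by
        apply Finset.sum_eq_zero
        intro e he
        simp only [Finset.mem_filter, Finset.mem_univ, true_and] at he
        simp [hη', he]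
      rw [h2, add_zero]
      apply Finset.sum_congr rfl
      intro e he
      simp only [Finset.mem_filter, Finset.mem_univ, true_and] at he
      simp [hη', he]
    have hle : Dobj w η' ≤ ∑ e, (μ e) ^ 2 / (2 * w e) := by
      unfold Dobj
      apply Finset.sum_le_sum
      intro e _
      have hl1 : l1norm (η' e) = ∑ v ∈ edge e, |p e v - n e v| := by
        rw [l1_eq_sum_on (A := edge e) (f := η' e) (fun v hv => by simp [hη', hv])]
        exact Finset.sum_congr rfl fun v hv => by simp [hη', hv]
      have hbound : l1norm (η' e) ≤ 2 * μ e := by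
        rw [hl1]
        calc ∑ v ∈ edge e, |p e v - n e v| ≤ ∑ v ∈ edge e, (p e v + n e v) := by
              apply Finset.sum_le_sum
              intro v hv
              have h1 := hp e v hv
              have h2 := hn e v hv
              rw [abs_le]
              exact ⟨by linarith, by linarith⟩
          _ = 2 * μ e := by rw [Finset.sum_add_distrib, hpe e, hne' e]; ring
      have hl1nn : 0 ≤ l1norm (η' e) := Finset.sum_nonneg fun v _ => abs_nonneg _
      have : (l1norm (η' e)) ^ 2 ≤ (2 * μ e) ^ 2 := by nlinarith
      calc (l1norm (η' e)) ^ 2 / (8 * w e) ≤ (2 * μ e) ^ 2 / (8 * w e) := by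
            exact (div_le_div_iff_of_pos_right (by linarith [hw e])).mpr this
          _ = (μ e) ^ 2 / (2 * w e) := by ring
    have : Dobj w η' ∈ S2 := ⟨η', hmem, hB', rfl⟩
    exact (csInf_le hbd2 this).trans hle

end
end

section
/- Assume H is connected and ∑_{v∈V} s_v = 0. If η∈𝓨 satisfies Bη = s, then the vector μ^η∈ℝ^E with μ^η_e = (1/2)‖η_e‖₁ belongs to 𝓜(s) and satisfies q(μ^η) = 𝓓(η). Conversely, for every μ∈𝓜(s) there exists η∈𝓨 with Bη = s and 𝓓(η) ≤ q(μ). Consequently, inf{𝓓(η) : η∈𝓨, Bη = s} = inf_{μ∈𝓜(s)} q(μ). -/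
open Finset

section

variable {V : Type*} [Fintype V] [DecidableEq V] [Nonempty V]
variable {E : Type*} [Fintype E]

/-- The quadratic mass objective `q(μ) = (1/2) ∑_e μ_e²/w_e`. -/
noncomputable def qObj (w : E → ℝ) (μ : E → ℝ) : ℝ := (1 / 2) * ∑ e, (μ e) ^ 2 / w e

/-- The set `𝓜(s)` of feasible edge-mass vectors for demand `s`. -/
def MassSet (edge : E → Finset V) (s : V → ℝ) : Set (E → ℝ) :=
  {μ | (∀ e, 0 ≤ μ e) ∧ ∃ p n : E → V → ℝ,
    (∀ e, ∀ v ∈ edge e, 0 ≤ p e v) ∧ (∀ e, ∀ v ∈ edge e, 0 ≤ n e v) ∧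
    (∀ v, ∑ e ∈ univ.filter (fun e => v ∈ edge e), (p e v - n e v) = s v) ∧
    (∀ e, ∑ v ∈ edge e, p e v = μ e) ∧ (∀ e, ∑ v ∈ edge e, n e v = μ e)}


lemma maxhalf (a : ℝ) : max a 0 = (a + |a|) / 2 := by
  rcases le_total a 0 with h | h
  · rw [max_eq_right h, abs_of_nonpos h]; ring
  · rw [max_eq_left h, abs_of_nonneg h]; ring

lemma maxneghalf (a : ℝ) : max (-a) 0 = (|a| - a) / 2 := by
  rcases le_total a 0 with h | h
  · rw [max_eq_left (by linarith), abs_of_nonpos h]; ring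
  · rw [max_eq_right (by linarith), abs_of_nonneg h]; ring

theorem stmt8 (edge : E → Finset V) (hne : ∀ e, (edge e).Nonempty)
    (w : E → ℝ) (hw : ∀ e, 0 < w e) (s : V → ℝ)
    (hconn : HConn edge) (hs : ∑ v, s v = 0) :
    (∀ η : E → V → ℝ, memY edge η → Bmap η = s →
      (fun e => (1 / 2) * l1norm (η e)) ∈ MassSet edge s ∧
      qObj w (fun e => (1 / 2) * l1norm (η e)) = Dobj w η) ∧
    (∀ μ ∈ MassSet edge s, ∃ η : E → V → ℝ, memY edge η ∧ Bmap η = s ∧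
      Dobj w η ≤ qObj w μ) ∧
    sInf {c : ℝ | ∃ η : E → V → ℝ, memY edge η ∧ Bmap η = s ∧ c = Dobj w η}
      = sInf {c : ℝ | ∃ μ ∈ MassSet edge s, c = qObj w μ} :=  by
  classical
  have key1 : ∀ η : E → V → ℝ, memY edge η → Bmap η = s →
      (fun e => (1 / 2) * l1norm (η e)) ∈ MassSet edge s ∧
      qObj w (fun e => (1 / 2) * l1norm (η e)) = Dobj w η := by
    intro η hY hB
    have hsupp : ∀ e v, v ∉ edge e → η e v = 0 := fun e => (hY e).1
    have hsum0 : ∀ e, ∑ v, η e v = 0 := fun e => (hY e).2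
    have hext : ∀ (e : E) (f : ℝ → ℝ), f 0 = 0 →
        ∑ v ∈ edge e, f (η e v) = ∑ v, f (η e v) := by
      intro e f hf
      refine Finset.sum_subset (Finset.subset_univ _) ?_
      intro v _ hv
      rw [hsupp e v hv, hf]
    have hp_sum : ∀ e, ∑ v ∈ edge e, max (η e v) 0 = (1 / 2) * l1norm (η e) := by
      intro e
      rw [hext e (fun x => max x 0) (by simp)]
      calc ∑ v, max (η e v) 0 = ∑ v, (η e v + |η e v|) / 2 := by
            exact Finset.sum_congr rfl fun v _ => maxhalf _
        _ = ((∑ v, η e v) + ∑ v, |η e v|) / 2 := by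
            rw [← Finset.sum_add_distrib, Finset.sum_div]
        _ = (1 / 2) * l1norm (η e) := by rw [hsum0, l1norm]; ring
    have hn_sum : ∀ e, ∑ v ∈ edge e, max (-(η e v)) 0 = (1 / 2) * l1norm (η e) := by
      intro e
      rw [hext e (fun x => max (-x) 0) (by simp)]
      calc ∑ v, max (-(η e v)) 0 = ∑ v, (|η e v| - η e v) / 2 := by
            exact Finset.sum_congr rfl fun v _ => maxneghalf _
        _ = ((∑ v, |η e v|) - ∑ v, η e v) / 2 := by
            rw [← Finset.sum_sub_distrib, Finset.sum_div]
        _ = (1 / 2) * l1norm (η e) := by rw [hsum0, l1norm]; ring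
    constructor
    · have hl1 : ∀ e, (0:ℝ) ≤ 1 / 2 * l1norm (η e) := by
        intro e
        have : 0 ≤ l1norm (η e) := by unfold l1norm; positivity
        linarith
      refine ⟨hl1, fun e v => max (η e v) 0,
        fun e v => max (-(η e v)) 0, fun e v _ => le_max_right _ _,
        fun e v _ => le_max_right _ _, ?_, hp_sum, hn_sum⟩
      intro v
      have h1 : ∀ e : E, max (η e v) 0 - max (-(η e v)) 0 = η e v := by
        intro e; rw [maxhalf, maxneghalf]; ring
      simp_rw [h1]
      rw [Finset.sum_filter]
      have h2 : ∀ e : E, (if v ∈ edge e then η e v else 0) = η e v := by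
        intro e
        split_ifs with h
        · rfl
        · exact (hsupp e v h).symm
      simp_rw [h2]
      exact congrFun hB v
    · unfold qObj Dobj
      rw [Finset.mul_sum]
      exact Finset.sum_congr rfl fun e _ => by ring
  have key2 : ∀ μ ∈ MassSet edge s, ∃ η : E → V → ℝ, memY edge η ∧ Bmap η = s ∧
      Dobj w η ≤ qObj w μ := by
    intro μ hμ
    obtain ⟨hμ0, p, n, hp, hn, hdiv, hpsum, hnsum⟩ := hμ
    set η : E → V → ℝ := fun e v => if v ∈ edge e then p e v - n e v else 0 with hη
    have hedge : ∀ e, ∑ v, η e v = ∑ v ∈ edge e, (p e v - n e v) := by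
      intro e
      rw [hη]
      simp only
      rw [Finset.sum_ite_mem, Finset.univ_inter]
    refine ⟨η, ?_, ?_, ?_⟩
    · intro e
      constructor
      · intro v hv; simp [hη, hv]
      · rw [hedge, Finset.sum_sub_distrib, hpsum, hnsum, sub_self]
    · funext v
      show ∑ e, η e v = s v
      rw [← hdiv v, Finset.sum_filter]
    · have hL : ∀ e, l1norm (η e) ≤ 2 * μ e := by
        intro e
        have h1 : l1norm (η e) = ∑ v ∈ edge e, |p e v - n e v| := by
          rw [l1norm]
          rw [show (fun v => |η e v|) = fun v => if v ∈ edge e then |p e v - n e v| else 0 from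
            funext fun v => by by_cases h : v ∈ edge e <;> simp [hη, h]]
          rw [Finset.sum_ite_mem, Finset.univ_inter]
        rw [h1]
        calc ∑ v ∈ edge e, |p e v - n e v| ≤ ∑ v ∈ edge e, (p e v + n e v) := by
              refine Finset.sum_le_sum fun v hv => ?_
              have := hp e v hv
              have := hn e v hv
              rw [abs_le]
              constructor <;> linarith
          _ = 2 * μ e := by
              rw [Finset.sum_add_distrib, hpsum, hnsum]; ring
      have hL0 : ∀ e, 0 ≤ l1norm (η e) := by
        intro e; unfold l1norm; positivity
      unfold Dobj qObj
      rw [Finset.mul_sum]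
      refine Finset.sum_le_sum fun e _ => ?_
      have h2 : l1norm (η e) ^ 2 ≤ (2 * μ e) ^ 2 := by
        exact pow_le_pow_left₀ (hL0 e) (hL e) 2
      calc l1norm (η e) ^ 2 / (8 * w e) ≤ (2 * μ e) ^ 2 / (8 * w e) :=
            div_le_div_of_nonneg_right h2 (by linarith [hw e])
        _ = 1 / 2 * (μ e ^ 2 / w e) := by ring
  refine ⟨key1, key2, ?_⟩
  set A : Set ℝ := {c : ℝ | ∃ η : E → V → ℝ, memY edge η ∧ Bmap η = s ∧ c = Dobj w η} with hA
  set B : Set ℝ := {c : ℝ | ∃ μ ∈ MassSet edge s, c = qObj w μ} with hBdef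
  have hAB : A ⊆ B := by
    rintro c ⟨η, hY, hBm, rfl⟩
    obtain ⟨hmem, heq⟩ := key1 η hY hBm
    exact ⟨_, hmem, heq.symm⟩
  have hBA : ∀ c ∈ B, ∃ a ∈ A, a ≤ c := by
    rintro c ⟨μ, hμ, rfl⟩
    obtain ⟨η, hY, hBm, hle⟩ := key2 μ hμ
    exact ⟨Dobj w η, ⟨η, hY, hBm, rfl⟩, hle⟩
  have hAbdd : BddBelow A := by
    refine ⟨0, ?_⟩
    rintro c ⟨η, hY, hBm, rfl⟩
    unfold Dobj
    refine Finset.sum_nonneg fun e _ => ?_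
    have := hw e
    positivity
  have hBbdd : BddBelow B := by
    refine ⟨0, ?_⟩
    rintro c ⟨μ, hμ, rfl⟩
    unfold qObj
    have : ∀ e ∈ (Finset.univ : Finset E), 0 ≤ μ e ^ 2 / w e := by
      intro e _
      have := hw e
      positivity
    have := Finset.sum_nonneg this
    linarith
  by_cases hAne : A.Nonempty
  · have hBne : B.Nonempty := hAne.mono hAB
    apply le_antisymm
    · refine le_csInf hBne fun b hb => ?_
      obtain ⟨a, ha, hab⟩ := hBA b hb
      exact (csInf_le hAbdd ha).trans hab
    · exact le_csInf hAne fun a ha => csInf_le hBbdd (hAB ha)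
  · have hBne : ¬ B.Nonempty := by
      rintro ⟨b, hb⟩
      obtain ⟨a, ha, -⟩ := hBA b hb
      exact hAne ⟨a, ha⟩
    rw [Set.not_nonempty_iff_eq_empty] at hAne hBne
    rw [hAne, hBne]


end
end

section
/- Assume H is connected, ∑_{v∈V} s_v = 0, and r∈ℝ^E with r_e ≥ 0 for all e∈E. Then the support maximization problem sup{⟨s,x⟩ : x∈𝓧₀, R_e(x) ≤ r_e for all e∈E} and the linear minimization problem inf{∑_{e∈E} r_e μ_e : μ∈𝓜(s)} both attain their optima, and L_s(r) = min_{μ∈𝓜(s)} ∑_{e∈E} r_e μ_e. -/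
open Finset

section FarkasAux

variable {ι : Type*} [Fintype ι] [DecidableEq ι] {n : Type*} [Fintype n] [DecidableEq n]

set_option linter.unusedSectionVars false

/-- Carathéodory for cones: any conic combination can be re-expressed over an
"independent" index set. -/
lemma cone_cara (g : ι → n → ℝ) (t : Finset ι) :
    ∀ (y : ι → ℝ), (∀ i, 0 ≤ y i) →
    ∃ (t' : Finset ι) (y' : ι → ℝ), (∀ i, 0 ≤ y' i) ∧
      (∑ i ∈ t', y' i • g i = ∑ i ∈ t, y i • g i) ∧
      (∀ c : ι → ℝ, ∑ i ∈ t', c i • g i = 0 → ∀ i ∈ t', c i = 0) := by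
  classical
  induction t using Finset.strongInduction with
  | _ t ih =>
    intro y hy
    by_cases hli : ∀ c : ι → ℝ, ∑ i ∈ t, c i • g i = 0 → ∀ i ∈ t, c i = 0
    · exact ⟨t, y, hy, rfl, hli⟩
    · push_neg at hli
      obtain ⟨c0, hc0, i0, hi0t, hci0⟩ := hli
      set c : ι → ℝ := if 0 < c0 i0 then c0 else -c0 with hc
      have hcsum : ∑ i ∈ t, c i • g i = 0 := by
        by_cases h : 0 < c0 i0
        · simpa [hc, h] using hc0
        · simp only [hc, if_neg h]
          simp [neg_smul, Finset.sum_neg_distrib, hc0]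
      have hcpos : 0 < c i0 := by
        by_cases h : 0 < c0 i0
        · simpa [hc, h]
        · have : c0 i0 < 0 := lt_of_le_of_ne (not_lt.mp h) hci0
          simp only [hc, if_neg h, Pi.neg_apply]
          linarith
      set P : Finset ι := t.filter (fun i => 0 < c i) with hP
      have hPne : P.Nonempty := ⟨i0, by simp [hP, hi0t, hcpos]⟩
      set τ : ℝ := P.inf' hPne (fun i => y i / c i) with hτ
      have hτ0 : 0 ≤ τ := by
        apply Finset.le_inf'
        intro i hi
        have : 0 < c i := (Finset.mem_filter.mp hi).2
        exact div_nonneg (hy i) this.le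
      obtain ⟨i1, hi1P, hi1⟩ := Finset.exists_mem_eq_inf' hPne (fun i => y i / c i)
      have hi1t : i1 ∈ t := (Finset.mem_filter.mp hi1P).1
      have hci1 : 0 < c i1 := (Finset.mem_filter.mp hi1P).2
      set y'' : ι → ℝ := fun i => if i ∈ t then y i - τ * c i else 0 with hy''
      have hy''0 : ∀ i, 0 ≤ y'' i := by
        intro i
        simp only [hy'']
        by_cases hit : i ∈ t
        · simp only [if_pos hit]
          by_cases hci : 0 < c i
          · have hiP : i ∈ P := Finset.mem_filter.mpr ⟨hit, hci⟩
            have := Finset.inf'_le (fun i => y i / c i) hiP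
            have : τ * c i ≤ y i := by
              rw [← le_div_iff₀ hci]; exact this
            linarith
          · have : τ * c i ≤ 0 := mul_nonpos_of_nonneg_of_nonpos hτ0 (not_lt.mp hci)
            have := hy i; linarith
        · rw [if_neg hit]
      have hy''i1 : y'' i1 = 0 := by
        simp only [hy'', if_pos hi1t]
        rw [hτ, hi1, div_mul_cancel₀ _ (ne_of_gt hci1), sub_self]
      have hsum'' : ∑ i ∈ t.erase i1, y'' i • g i = ∑ i ∈ t, y i • g i := by
        rw [Finset.sum_erase _ (by rw [hy''i1]; exact zero_smul ℝ _)]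
        have : ∀ i ∈ t, y'' i • g i = y i • g i - (τ * c i) • g i := by
          intro i hit
          simp only [hy'', if_pos hit, sub_smul]
        rw [Finset.sum_congr rfl this, Finset.sum_sub_distrib]
        have : ∑ i ∈ t, (τ * c i) • g i = τ • ∑ i ∈ t, c i • g i := by
          rw [Finset.smul_sum]
          exact Finset.sum_congr rfl fun i _ => by rw [smul_smul]
        rw [this, hcsum, smul_zero, sub_zero]
      obtain ⟨t', y', h1, h2, h3⟩ := ih (t.erase i1) (Finset.erase_ssubset hi1t) y'' hy''0
      exact ⟨t', y', h1, by rw [h2, hsum''], h3⟩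

/-- Conic combination over a finite index subset, as a linear map. -/
def Lmap (g : ι → n → ℝ) (t : Finset ι) : ({i // i ∈ t} → ℝ) →ₗ[ℝ] (n → ℝ) where
  toFun := fun y => ∑ i : {i // i ∈ t}, y i • g i
  map_add' := by intro a b; simp [add_smul, Finset.sum_add_distrib]
  map_smul' := by intro m a; simp [smul_smul, Finset.smul_sum]

/-- The finitely generated cone, as a set. -/
def coneSet (g : ι → n → ℝ) : Set (n → ℝ) :=
  {x | ∃ y : ι → ℝ, (∀ i, 0 ≤ y i) ∧ x = ∑ i, y i • g i}

lemma coneSet_convex (g : ι → n → ℝ) : Convex ℝ (coneSet g) := by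
  rintro x ⟨yx, hyx, rfl⟩ z ⟨yz, hyz, rfl⟩ a b ha hb hab
  refine ⟨fun i => a * yx i + b * yz i,
    fun i => add_nonneg (mul_nonneg ha (hyx i)) (mul_nonneg hb (hyz i)), ?_⟩
  rw [Finset.smul_sum, Finset.smul_sum, ← Finset.sum_add_distrib]
  exact Finset.sum_congr rfl fun i _ => by
    rw [add_smul, smul_smul, smul_smul]

lemma coneSet_isClosed (g : ι → n → ℝ) : IsClosed (coneSet g) := by
  classical
  set Good : Finset ι → Prop :=
    fun t => ∀ c : ι → ℝ, ∑ i ∈ t, c i • g i = 0 → ∀ i ∈ t, c i = 0 with hGood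
  have key : coneSet g = ⋃ t : {t : Finset ι // Good t},
      (Lmap g t.1) '' {y | ∀ i, 0 ≤ y i} := by
    ext x
    constructor
    · rintro ⟨y, hy, rfl⟩
      obtain ⟨t', y', h1, h2, h3⟩ := cone_cara g Finset.univ y hy
      refine Set.mem_iUnion.mpr ⟨⟨t', h3⟩, ⟨fun i => y' i, fun i => h1 i, ?_⟩⟩
      simp only [Lmap, LinearMap.coe_mk, AddHom.coe_mk]
      rw [← h2, ← Finset.sum_attach t' (fun i => y' i • g i)]
      rfl
    · intro hx
      obtain ⟨⟨t, ht⟩, y0, hy0, rfl⟩ := Set.mem_iUnion.mp hx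
      refine ⟨fun i => if h : i ∈ t then y0 ⟨i, h⟩ else 0, fun i => ?_, ?_⟩
      · by_cases h : i ∈ t <;> simp [h, hy0 _]
      · simp only [Lmap, LinearMap.coe_mk, AddHom.coe_mk]
        calc ∑ i : {i // i ∈ t}, y0 i • g ↑i
            = ∑ i ∈ t.attach, (if h : (i : ι) ∈ t then y0 ⟨i, h⟩ else 0) • g ↑i := by
              rw [← Finset.univ_eq_attach]
              exact Finset.sum_congr rfl fun i _ => by rw [dif_pos i.2]
          _ = ∑ i ∈ t, (if h : i ∈ t then y0 ⟨i, h⟩ else 0) • g i :=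
              Finset.sum_attach t (fun i => (if h : i ∈ t then y0 ⟨i, h⟩ else 0) • g i)
          _ = ∑ i : ι, (if h : i ∈ t then y0 ⟨i, h⟩ else 0) • g i :=
              Finset.sum_subset (Finset.subset_univ t) (fun i _ hit => by simp [hit])
  rw [key]
  apply isClosed_iUnion_of_finite
  rintro ⟨t, ht⟩
  have hinj : LinearMap.ker (Lmap g t) = ⊥ := by
    rw [LinearMap.ker_eq_bot']
    intro y hy0
    have h1 : ∑ i ∈ t, (fun i => if h : i ∈ t then y ⟨i, h⟩ else 0) i • g i = 0 := by
      rw [← Finset.sum_attach t (fun i => (if h : i ∈ t then y ⟨i,h⟩ else 0) • g i)]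
      have : ∀ i ∈ t.attach, (if h : (i : ι) ∈ t then y ⟨i, h⟩ else 0) • g i = y i • g i := by
        intro i _
        rw [dif_pos i.2]
      rw [Finset.sum_congr rfl this]
      rw [← Finset.univ_eq_attach]
      exact hy0
    funext i
    have := ht _ h1 i i.2
    rw [dif_pos i.2] at this
    simpa using this
  exact ((Lmap g t).isClosedEmbedding_of_injective hinj).isClosedMap _
    (by rw [Set.setOf_forall]; exact isClosed_iInter fun i =>
      isClosed_le continuous_const (continuous_apply i))

/-- Farkas alternative. -/
lemma farkas (g : ι → n → ℝ) (s : n → ℝ) :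
    (∃ y : ι → ℝ, (∀ i, 0 ≤ y i) ∧ s = ∑ i, y i • g i) ∨
    (∃ d : n → ℝ, (0 < ∑ v, s v * d v) ∧ ∀ i, ∑ v, g i v * d v ≤ 0) := by
  classical
  by_cases hs : s ∈ coneSet g
  · exact Or.inl hs
  · right
    obtain ⟨f, u, hfC, hfs⟩ :=
      geometric_hahn_banach_closed_point (coneSet_convex g) (coneSet_isClosed g) hs
    have h0C : (0 : n → ℝ) ∈ coneSet g := ⟨0, by simp, by simp⟩
    have hu0 : 0 < u := by simpa using hfC 0 h0C
    have hrep : ∀ z : n → ℝ, f z = ∑ v, z v * f (fun j => if v = j then 1 else 0) := by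
      intro z
      conv_lhs => rw [pi_eq_sum_univ z]
      rw [map_sum]
      exact Finset.sum_congr rfl fun v _ => by rw [f.map_smul, smul_eq_mul]
    set d : n → ℝ := fun v => f (fun j => if v = j then 1 else 0) with hd
    refine ⟨d, ?_, ?_⟩
    · have : 0 < f s := lt_trans hu0 hfs
      rw [hrep s] at this
      exact this
    · intro i
      have hgi : ∀ τ : ℝ, 0 ≤ τ → f (τ • g i) < u := by
        intro τ hτ
        apply hfC
        refine ⟨fun j => if j = i then τ else 0,
          fun j => by by_cases h : j = i <;> simp [h, hτ], ?_⟩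
        simp [ite_smul]
      have hfgi : f (g i) ≤ 0 := by
        by_contra h
        push_neg at h
        have h2 := hgi ((u + 1) / f (g i)) (div_nonneg (by linarith) h.le)
        rw [f.map_smul, smul_eq_mul, div_mul_cancel₀ _ (ne_of_gt h)] at h2
        linarith
      calc ∑ v, g i v * d v = f (g i) := (hrep (g i)).symm
        _ ≤ 0 := hfgi

end FarkasAux

section

variable {V : Type*} [Fintype V] [DecidableEq V] [Nonempty V]
variable {E : Type*} [Fintype E]

set_option linter.unusedSectionVars false

/-- Weighted degree `d_v = ∑_{e ∋ v} w_e`. -/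
noncomputable def degw (edge : E → Finset V) (w : E → ℝ) (v : V) : ℝ :=
  ∑ e ∈ univ.filter (fun e => v ∈ edge e), w e

/-- Membership in `𝓧₀`: weighted zero-mean. -/
def memX0 (edge : E → Finset V) (w : E → ℝ) (x : V → ℝ) : Prop :=
  ∑ v, degw edge w v * x v = 0

lemma eRange_le_iff (edge : E → Finset V) (hne : ∀ e, (edge e).Nonempty)
    (x : V → ℝ) (e : E) (c : ℝ) :
    eRange edge hne x e ≤ c ↔ ∀ u ∈ edge e, ∀ v ∈ edge e, x u - x v ≤ c := by
  unfold eRange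
  rw [sub_le_iff_le_add, Finset.sup'_le_iff]
  constructor
  · intro h u hu v hv
    have h1 := h u hu
    have h2 := Finset.inf'_le x hv
    linarith
  · intro h u hu
    rw [← sub_le_iff_le_add']
    apply Finset.le_inf'
    intro v hv
    linarith [h u hu v hv]

lemma chain_bound (edge : E → Finset V) (r : E → ℝ) (x : V → ℝ)
    (hx : ∀ e, ∀ a ∈ edge e, ∀ b ∈ edge e, x a - x b ≤ r e) :
    ∀ (k : ℕ) (p : Fin (k+1) → V) (c : Fin k → E),
    (∀ i : Fin k, p i.castSucc ∈ edge (c i) ∧ p i.succ ∈ edge (c i)) →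
    x (p 0) - x (p (Fin.last k)) ≤ ∑ i, r (c i) := by
  intro k
  induction k with
  | zero =>
    intro p c _
    simp [Fin.last]
  | succ k ih =>
    intro p c h
    have h1 := ih (fun i => p i.castSucc) (fun i => c i.castSucc) (fun i => by
      refine ⟨(h i.castSucc).1, ?_⟩
      have := (h i.castSucc).2
      rwa [Fin.succ_castSucc] at this)
    have h2 : x (p ((Fin.last k).castSucc)) - x (p (Fin.last (k+1))) ≤ r (c (Fin.last k)) := by
      have hc := h (Fin.last k)
      have hlast : (Fin.last k).succ = Fin.last (k+1) := Fin.succ_last k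
      rw [← hlast]
      exact hx _ _ hc.1 _ hc.2
    rw [Fin.sum_univ_castSucc]
    simp only [Fin.castSucc_zero] at h1
    linarith

lemma weak_dual (edge : E → Finset V) (hne : ∀ e, (edge e).Nonempty)
    (s : V → ℝ) (r : E → ℝ) (x : V → ℝ)
    (hx : ∀ e, eRange edge hne x e ≤ r e) (μ : E → ℝ) (hμ : μ ∈ MassSet edge s) :
    ∑ v, s v * x v ≤ ∑ e, r e * μ e := by
  classical
  obtain ⟨hμ0, p, n, hp, hn, hdiv, hpsum, hnsum⟩ := hμ
  have swap : ∑ v, s v * x v = ∑ e, ∑ v ∈ edge e, (p e v - n e v) * x v := by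
    calc ∑ v, s v * x v
        = ∑ v, ∑ e ∈ univ.filter (fun e => v ∈ edge e), (p e v - n e v) * x v := by
          refine Finset.sum_congr rfl fun v _ => ?_
          rw [← hdiv v, Finset.sum_mul]
      _ = ∑ v : V, ∑ e : E, (if v ∈ edge e then (p e v - n e v) * x v else 0) := by
          refine Finset.sum_congr rfl fun v _ => ?_
          rw [Finset.sum_filter]
      _ = ∑ e : E, ∑ v : V, (if v ∈ edge e then (p e v - n e v) * x v else 0) :=
          Finset.sum_comm
      _ = ∑ e, ∑ v ∈ edge e, (p e v - n e v) * x v := by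
          refine Finset.sum_congr rfl fun e _ => ?_
          rw [Finset.sum_ite_mem, Finset.univ_inter]
  rw [swap]
  apply Finset.sum_le_sum
  intro e _
  have h1 : ∑ v ∈ edge e, p e v * x v ≤ ∑ v ∈ edge e, p e v * (edge e).sup' (hne e) x :=
    Finset.sum_le_sum fun v hv =>
      mul_le_mul_of_nonneg_left (Finset.le_sup' x hv) (hp e v hv)
  have h2 : ∑ v ∈ edge e, n e v * (edge e).inf' (hne e) x ≤ ∑ v ∈ edge e, n e v * x v :=
    Finset.sum_le_sum fun v hv =>
      mul_le_mul_of_nonneg_left (Finset.inf'_le x hv) (hn e v hv)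
  have e1 : ∑ v ∈ edge e, p e v * (edge e).sup' (hne e) x = μ e * (edge e).sup' (hne e) x := by
    rw [← Finset.sum_mul, hpsum]
  have e2 : ∑ v ∈ edge e, n e v * (edge e).inf' (hne e) x = μ e * (edge e).inf' (hne e) x := by
    rw [← Finset.sum_mul, hnsum]
  have hsplit : ∑ v ∈ edge e, (p e v - n e v) * x v
      = ∑ v ∈ edge e, p e v * x v - ∑ v ∈ edge e, n e v * x v := by
    rw [← Finset.sum_sub_distrib]
    exact Finset.sum_congr rfl fun v _ => by ring
  have hrange : (edge e).sup' (hne e) x - (edge e).inf' (hne e) x ≤ r e := hx e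
  have hfinal : μ e * ((edge e).sup' (hne e) x - (edge e).inf' (hne e) x) ≤ μ e * r e :=
    mul_le_mul_of_nonneg_left hrange (hμ0 e)
  rw [hsplit]
  rw [mul_sub] at hfinal
  rw [mul_comm (r e) (μ e)]
  linarith


theorem stmt9 (edge : E → Finset V) (hne : ∀ e, (edge e).Nonempty)
    (w : E → ℝ) (hw : ∀ e, 0 < w e) (s : V → ℝ) (r : E → ℝ)
    (hconn : HConn edge) (hs : ∑ v, s v = 0) (hr : ∀ e, 0 ≤ r e) :
    ∃ xstar : V → ℝ,
      (memX0 edge w xstar ∧ ∀ e, eRange edge hne xstar e ≤ r e) ∧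
      (∀ x : V → ℝ, memX0 edge w x → (∀ e, eRange edge hne x e ≤ r e) →
        ∑ v, s v * x v ≤ ∑ v, s v * xstar v) ∧
      ∃ μstar ∈ MassSet edge s,
        (∀ μ ∈ MassSet edge s, ∑ e, r e * μstar e ≤ ∑ e, r e * μ e) ∧
        ∑ v, s v * xstar v = ∑ e, r e * μstar e := by
  classical
  rcases subsingleton_or_nontrivial V with hV | hV
  · -- degenerate case: a single vertex
    have hs0 : ∀ v, s v = 0 := by
      intro v
      have huniv : (Finset.univ : Finset V) = {v} := by
        ext u; simp [Subsingleton.elim u v]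
      rw [huniv, Finset.sum_singleton] at hs
      exact hs
    refine ⟨0, ⟨?_, ?_⟩, ?_, 0, ⟨fun e => le_rfl, 0, 0, by simp, by simp,
      fun v => by simp [hs0 v], by simp, by simp⟩, ?_, ?_⟩
    · unfold memX0; simp
    · intro e; simpa [eRange] using hr e
    · intro x _ _; simp [hs0]
    · intro μ hμ
      simp only [Pi.zero_apply, mul_zero, Finset.sum_const_zero]
      exact Finset.sum_nonneg fun e _ => mul_nonneg (hr e) (hμ.1 e)
    · simp
  · -- main case
    have hcover : ∀ v : V, ∃ e, v ∈ edge e := by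
      intro v
      obtain ⟨u, huv⟩ := exists_ne v
      obtain ⟨k, p, c, hp0, hpl, hpc⟩ := hconn v u
      cases k with
      | zero =>
        exfalso
        have h01 : (Fin.last 0) = (0 : Fin 1) := Fin.ext (by simp)
        rw [h01, hp0] at hpl
        exact huv hpl.symm
      | succ k =>
        refine ⟨c 0, ?_⟩
        have h := (hpc 0).1
        rwa [Fin.castSucc_zero, hp0] at h
    have hdeg : ∀ v, 0 < degw edge w v := by
      intro v
      obtain ⟨e, he⟩ := hcover v
      unfold degw
      exact Finset.sum_pos (fun e' _ => hw e')
        ⟨e, Finset.mem_filter.mpr ⟨Finset.mem_univ e, he⟩⟩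
    set D : ℝ := ∑ v, degw edge w v with hD
    have hD0 : 0 < D := Finset.sum_pos (fun v _ => hdeg v) Finset.univ_nonempty
    choose pk pp pc hp0 hpl hpc using hconn
    set B : V → V → ℝ := fun u v => ∑ i, r (pc u v i) with hB
    set Bm : ℝ := Finset.univ.sup' Finset.univ_nonempty (fun q : V × V => B q.1 q.2) with hBm
    set S : Set (V → ℝ) := {x | (∑ v, degw edge w v * x v = 0) ∧
      ∀ e, ∀ a ∈ edge e, ∀ b ∈ edge e, x a - x b ≤ r e} with hSdef
    have hmemS : ∀ x, x ∈ S ↔ ((∑ v, degw edge w v * x v = 0) ∧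
        ∀ e, ∀ a ∈ edge e, ∀ b ∈ edge e, x a - x b ≤ r e) := fun x => Iff.rfl
    have hpair : ∀ x ∈ S, ∀ u v' : V, x u - x v' ≤ B u v' := by
      intro x hx u v'
      have := chain_bound edge r x ((hmemS x).mp hx).2 (pk u v') (pp u v') (pc u v') (hpc u v')
      rwa [hp0 u v', hpl u v'] at this
    have habs : ∀ x ∈ S, ∀ v', |x v'| ≤ Bm := by
      intro x hx v'
      have hBmle : ∀ u v'' : V, x u - x v'' ≤ Bm := fun u v'' =>
        le_trans (hpair x hx u v'')
          (Finset.le_sup' (fun q : V × V => B q.1 q.2) (Finset.mem_univ (u, v'')))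
      have key : D * x v' = ∑ u, degw edge w u * (x v' - x u) := by
        calc D * x v' = ∑ u, degw edge w u * x v' - ∑ u, degw edge w u * x u := by
              rw [((hmemS x).mp hx).1, sub_zero, hD, Finset.sum_mul]
          _ = ∑ u, degw edge w u * (x v' - x u) := by
              rw [← Finset.sum_sub_distrib]
              exact Finset.sum_congr rfl fun u _ => by ring
      have habs2 : |D * x v'| ≤ D * Bm := by
        rw [key]
        calc |∑ u, degw edge w u * (x v' - x u)|
            ≤ ∑ u, |degw edge w u * (x v' - x u)| := Finset.abs_sum_le_sum_abs _ _
          _ ≤ ∑ u, degw edge w u * Bm := by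
              apply Finset.sum_le_sum
              intro u _
              rw [abs_mul, abs_of_pos (hdeg u)]
              exact mul_le_mul_of_nonneg_left
                (abs_sub_le_iff.mpr ⟨hBmle v' u, hBmle u v'⟩) (hdeg u).le
          _ = D * Bm := by rw [← Finset.sum_mul]
      rw [abs_mul, abs_of_pos hD0] at habs2
      exact le_of_mul_le_mul_left habs2 hD0
    have h0S : (0 : V → ℝ) ∈ S := by
      rw [hmemS]
      refine ⟨by simp, fun e a _ b _ => by simpa using hr e⟩
    have hSclosed : IsClosed S := by
      have hrw : S = {x : V → ℝ | ∑ v, degw edge w v * x v = 0} ∩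
          ⋂ (e : E) (a : V) (b : V),
            {x : V → ℝ | a ∈ edge e → b ∈ edge e → x a - x b ≤ r e} := by
        ext x
        rw [hmemS]
        simp only [Set.mem_inter_iff, Set.mem_setOf_eq, Set.mem_iInter]
        tauto
      rw [hrw]
      apply IsClosed.inter
      · exact isClosed_eq
          (continuous_finset_sum _ fun v _ => continuous_const.mul (continuous_apply v))
          continuous_const
      · refine isClosed_iInter fun e => isClosed_iInter fun a => isClosed_iInter fun b => ?_
        by_cases ha : a ∈ edge e
        · by_cases hb : b ∈ edge e
          · have hq : {x : V → ℝ | a ∈ edge e → b ∈ edge e → x a - x b ≤ r e}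
                = {x : V → ℝ | x a - x b ≤ r e} := by ext x; simp [ha, hb]
            rw [hq]
            exact isClosed_le ((continuous_apply a).sub (continuous_apply b)) continuous_const
          · have hq : {x : V → ℝ | a ∈ edge e → b ∈ edge e → x a - x b ≤ r e}
                = Set.univ := by ext x; simp [hb]
            rw [hq]; exact isClosed_univ
        · have hq : {x : V → ℝ | a ∈ edge e → b ∈ edge e → x a - x b ≤ r e}
              = Set.univ := by ext x; simp [ha]
          rw [hq]; exact isClosed_univ
    have hScompact : IsCompact S := by
      apply IsCompact.of_isClosed_subset
        (isCompact_univ_pi fun _ : V => isCompact_Icc (a := -Bm) (b := Bm)) hSclosed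
      intro x hx
      rw [Set.mem_univ_pi]
      intro v'
      rw [Set.mem_Icc]
      exact abs_le.mp (habs x hx v')
    have hcont : ContinuousOn (fun x : V → ℝ => ∑ v, s v * x v) S :=
      (continuous_finset_sum _ fun v _ => continuous_const.mul (continuous_apply v)).continuousOn
    obtain ⟨xs, hxsS, hmax'⟩ := hScompact.exists_isMaxOn ⟨0, h0S⟩ hcont
    have hmax : ∀ x ∈ S, ∑ v, s v * x v ≤ ∑ v, s v * xs v := fun x hx => hmax' hx
    obtain ⟨hxs0, hxsc⟩ := (hmemS xs).mp hxsS
    set act : E × V × V → Prop := fun i =>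
      i.2.1 ∈ edge i.1 ∧ i.2.2 ∈ edge i.1 ∧ xs i.2.1 - xs i.2.2 = r i.1 with hact
    set g : E × V × V → V → ℝ := fun i =>
      if act i then (fun v => (if v = i.2.1 then (1:ℝ) else 0) - (if v = i.2.2 then 1 else 0))
      else 0 with hg
    have hgsum : ∀ (i : E × V × V) (z : V → ℝ), act i →
        ∑ v, g i v * z v = z i.2.1 - z i.2.2 := by
      intro i z hia
      have hgi : ∀ v, g i v = (if v = i.2.1 then (1:ℝ) else 0) - (if v = i.2.2 then 1 else 0) := by
        intro v
        rw [hg]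
        simp only [if_pos hia]
      have hterm : ∀ v, g i v * z v
          = (if v = i.2.1 then z v else 0) - (if v = i.2.2 then z v else 0) := by
        intro v
        rw [hgi v]
        split_ifs <;> ring
      rw [Finset.sum_congr rfl fun v _ => hterm v, Finset.sum_sub_distrib,
        Finset.sum_ite_eq' Finset.univ i.2.1 z, Finset.sum_ite_eq' Finset.univ i.2.2 z]
      simp
    have hxfeas : ∀ e, eRange edge hne xs e ≤ r e := fun e =>
      (eRange_le_iff edge hne xs e (r e)).mpr (hxsc e)
    rcases farkas g s with ⟨y, hy, hrep⟩ | ⟨d, hds, hdg⟩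
    · -- from the Farkas certificate, build the optimal dual mass vector
      set y' : E × V × V → ℝ := fun i => if act i then y i else 0 with hy'def
      have hy'0 : ∀ i, 0 ≤ y' i := fun i => by
        rw [hy'def]; dsimp only; split_ifs; exacts [hy i, le_rfl]
      have hy'act : ∀ i, ¬ act i → y' i = 0 := fun i h => by
        rw [hy'def]; dsimp only; rw [if_neg h]
      have hy'eq : ∀ i, act i → y' i = y i := fun i h => by
        rw [hy'def]; dsimp only; rw [if_pos h]
      have hterm : ∀ (i : E × V × V) (v : V), (y i • g i) v
          = y' i * ((if v = i.2.1 then (1:ℝ) else 0) - (if v = i.2.2 then 1 else 0)) := by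
        intro i v
        rw [Pi.smul_apply, smul_eq_mul]
        by_cases h : act i
        · rw [hy'eq i h]
          congr 1
          rw [hg]
          simp only [if_pos h]
        · rw [hy'act i h, zero_mul]
          rw [hg]
          simp only [if_neg h, Pi.zero_apply, mul_zero]
      have hrepv : ∀ v, s v = ∑ i : E × V × V, y' i *
          ((if v = i.2.1 then (1:ℝ) else 0) - (if v = i.2.2 then 1 else 0)) := by
        intro v
        have hv := congrFun hrep v
        rw [Finset.sum_apply] at hv
        rw [hv]
        exact Finset.sum_congr rfl fun i _ => hterm i v
      set pP : E → V → ℝ := fun e u => ∑ b : V, y' (e, u, b) with hpP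
      set nN : E → V → ℝ := fun e v => ∑ a : V, y' (e, a, v) with hnN
      set μs : E → ℝ := fun e => ∑ a : V, ∑ b : V, y' (e, a, b) with hμs
      have hy'mem1 : ∀ e a b, a ∉ edge e → y' (e, a, b) = 0 := by
        intro e a b ha
        apply hy'act
        rw [hact]
        rintro ⟨h1, -, -⟩
        exact ha h1
      have hy'mem2 : ∀ e a b, b ∉ edge e → y' (e, a, b) = 0 := by
        intro e a b hb
        apply hy'act
        rw [hact]
        rintro ⟨-, h2, -⟩
        exact hb h2
      have hpPfull : ∀ e, ∑ u : V, pP e u = μs e := fun e => rfl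
      have hnNfull : ∀ e, ∑ v : V, nN e v = μs e := fun e => by
        rw [hnN, hμs]; dsimp only; exact Finset.sum_comm
      have hdelta : ∀ (i : E × V × V) (v : V),
          y' i * ((if v = i.2.1 then (1:ℝ) else 0) - (if v = i.2.2 then 1 else 0))
          = (if v = i.2.1 then y' i else 0) - (if v = i.2.2 then y' i else 0) := by
        intro i v
        split_ifs <;> ring
      have hμMass : μs ∈ MassSet edge s := by
        refine ⟨fun e => Finset.sum_nonneg fun a _ => Finset.sum_nonneg fun b _ => hy'0 _,
          pP, nN, fun e v _ => Finset.sum_nonneg fun b _ => hy'0 _,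
          fun e v _ => Finset.sum_nonneg fun a _ => hy'0 _, ?_, ?_, ?_⟩
        · -- divergence constraint
          intro v
          have hfull : s v = ∑ e : E, (pP e v - nN e v) := by
            rw [hrepv v, Finset.sum_congr rfl fun i _ => hdelta i v,
              Finset.sum_sub_distrib]
            have hA : ∑ i : E × V × V, (if v = i.2.1 then y' i else 0) = ∑ e : E, pP e v := by
              rw [Fintype.sum_prod_type]
              refine Finset.sum_congr rfl fun e _ => ?_
              rw [Fintype.sum_prod_type]
              calc ∑ a : V, ∑ b : V, (if v = a then y' (e, a, b) else 0)
                  = ∑ a : V, (if v = a then ∑ b : V, y' (e, a, b) else 0) := by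
                    refine Finset.sum_congr rfl fun a _ => ?_
                    split_ifs <;> simp
                _ = ∑ b : V, y' (e, v, b) := by
                    rw [Finset.sum_ite_eq]
                    simp
                _ = pP e v := rfl
            have hBz : ∑ i : E × V × V, (if v = i.2.2 then y' i else 0) = ∑ e : E, nN e v := by
              rw [Fintype.sum_prod_type]
              refine Finset.sum_congr rfl fun e _ => ?_
              rw [Fintype.sum_prod_type]
              calc ∑ a : V, ∑ b : V, (if v = b then y' (e, a, b) else 0)
                  = ∑ a : V, y' (e, a, v) := by
                    refine Finset.sum_congr rfl fun a _ => ?_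
                    rw [Finset.sum_ite_eq]
                    simp
                _ = nN e v := rfl
            rw [hA, hBz, ← Finset.sum_sub_distrib]
          rw [hfull]
          apply Finset.sum_subset (Finset.filter_subset _ _)
          intro e _ he
          have hv : v ∉ edge e := by
            simpa using he
          have hz1 : pP e v = 0 := Finset.sum_eq_zero fun b _ => hy'mem1 e v b hv
          have hz2 : nN e v = 0 := Finset.sum_eq_zero fun a _ => hy'mem2 e a v hv
          rw [hz1, hz2, sub_zero]
        · -- p sums to μ on each edge
          intro e
          rw [← hpPfull e]
          exact Finset.sum_subset (Finset.subset_univ _)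
            (fun a _ ha => Finset.sum_eq_zero fun b _ => hy'mem1 e a b ha)
        · -- n sums to μ on each edge
          intro e
          rw [← hnNfull e]
          exact Finset.sum_subset (Finset.subset_univ _)
            (fun v _ hv => Finset.sum_eq_zero fun a _ => hy'mem2 e a v hv)
      have hval : ∑ v, s v * xs v = ∑ e, r e * μs e := by
        have L1 : ∑ v, s v * xs v = ∑ i : E × V × V, y' i * (xs i.2.1 - xs i.2.2) := by
          calc ∑ v, s v * xs v
              = ∑ v, (∑ i : E × V × V, y' i *
                ((if v = i.2.1 then (1:ℝ) else 0) - (if v = i.2.2 then 1 else 0))) * xs v :=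
                Finset.sum_congr rfl fun v _ => by rw [← hrepv v]
            _ = ∑ v, ∑ i : E × V × V, y' i *
                (((if v = i.2.1 then (1:ℝ) else 0) - (if v = i.2.2 then 1 else 0)) * xs v) := by
                refine Finset.sum_congr rfl fun v _ => ?_
                rw [Finset.sum_mul]
                exact Finset.sum_congr rfl fun i _ => by ring
            _ = ∑ i : E × V × V, ∑ v, y' i *
                (((if v = i.2.1 then (1:ℝ) else 0) - (if v = i.2.2 then 1 else 0)) * xs v) :=
                Finset.sum_comm
            _ = ∑ i : E × V × V, y' i * (xs i.2.1 - xs i.2.2) := by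
                refine Finset.sum_congr rfl fun i _ => ?_
                rw [← Finset.mul_sum]
                congr 1
                have hstep : ∀ v : V,
                    ((if v = i.2.1 then (1:ℝ) else 0) - (if v = i.2.2 then 1 else 0)) * xs v
                    = (if v = i.2.1 then xs v else 0) - (if v = i.2.2 then xs v else 0) := by
                  intro v
                  split_ifs <;> ring
                rw [Finset.sum_congr rfl fun v _ => hstep v, Finset.sum_sub_distrib,
                  Finset.sum_ite_eq' Finset.univ i.2.1 xs, Finset.sum_ite_eq' Finset.univ i.2.2 xs]
                simp
        have L2 : ∀ i : E × V × V, y' i * (xs i.2.1 - xs i.2.2) = y' i * r i.1 := by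
          intro i
          by_cases h : act i
          · have h3 : xs i.2.1 - xs i.2.2 = r i.1 := by
              rw [hact] at h
              exact h.2.2
            rw [h3]
          · rw [hy'act i h, zero_mul, zero_mul]
        have L3 : ∑ e, r e * μs e = ∑ i : E × V × V, y' i * r i.1 := by
          rw [Fintype.sum_prod_type]
          refine Finset.sum_congr rfl fun e _ => ?_
          rw [hμs]
          dsimp only
          rw [Finset.mul_sum, Fintype.sum_prod_type]
          refine Finset.sum_congr rfl fun a _ => ?_
          rw [Finset.mul_sum]
          exact Finset.sum_congr rfl fun b _ => mul_comm _ _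
        rw [L1, Finset.sum_congr rfl fun i _ => L2 i, L3]
      refine ⟨xs, ⟨hxs0, hxfeas⟩, ?_, μs, hμMass, ?_, hval⟩
      · intro x hx0 hxr
        exact hmax x ((hmemS x).mpr
          ⟨hx0, fun e a ha b hb => (eRange_le_iff edge hne x e (r e)).mp (hxr e) a ha b hb⟩)
      · intro μ hμ
        rw [← hval]
        exact weak_dual edge hne s r xs hxfeas μ hμ
    · -- an improving direction contradicts optimality of `xs`
      exfalso
      have hdact : ∀ i : E × V × V, act i → d i.2.1 - d i.2.2 ≤ 0 := by
        intro i hia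
        have := hdg i
        rwa [hgsum i d hia] at this
      set T : Finset (E × V × V) := Finset.univ.filter (fun i : E × V × V =>
        i.2.1 ∈ edge i.1 ∧ i.2.2 ∈ edge i.1 ∧ 0 < d i.2.1 - d i.2.2) with hT
      have hslack : ∀ i ∈ T, xs i.2.1 - xs i.2.2 < r i.1 := by
        intro i hi
        obtain ⟨-, h1, h2, h3⟩ := Finset.mem_filter.mp hi
        rcases lt_or_eq_of_le (hxsc i.1 _ h1 _ h2) with h | h
        · exact h
        · exfalso
          have hia : act i := by
            rw [hact]
            exact ⟨h1, h2, h⟩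
          have := hdact i hia
          linarith
      set t0 : ℝ := if hTne : T.Nonempty then
        T.inf' hTne (fun i => (r i.1 - (xs i.2.1 - xs i.2.2)) / (d i.2.1 - d i.2.2))
        else 1 with ht0
      have ht00 : 0 < t0 := by
        rw [ht0]
        split_ifs with hTne
        · rw [Finset.lt_inf'_iff]
          intro i hi
          obtain ⟨-, h1, h2, h3⟩ := Finset.mem_filter.mp hi
          exact div_pos (by linarith [hslack i hi]) h3
        · exact one_pos
      have hstep : ∀ (e : E) (a : V), a ∈ edge e → ∀ b ∈ edge e,
          (xs a + t0 * d a) - (xs b + t0 * d b) ≤ r e := by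
        intro e a ha b hb
        by_cases hdi : 0 < d a - d b
        · have hiT : (e, a, b) ∈ T :=
            Finset.mem_filter.mpr ⟨Finset.mem_univ _, ha, hb, hdi⟩
          have hinf : t0 ≤ (r e - (xs a - xs b)) / (d a - d b) := by
            rw [ht0, dif_pos ⟨(e, a, b), hiT⟩]
            exact Finset.inf'_le _ hiT
          rw [le_div_iff₀ hdi] at hinf
          have hexp : t0 * (d a - d b) = t0 * d a - t0 * d b := by ring
          linarith
        · have hfe := hxsc e a ha b hb
          have h2 : t0 * (d a - d b) ≤ 0 :=
            mul_nonpos_of_nonneg_of_nonpos ht00.le (not_lt.mp hdi)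
          have hexp : t0 * (d a - d b) = t0 * d a - t0 * d b := by ring
          linarith
      set ym : V → ℝ := fun v => xs v + t0 * d v with hym
      set cc : ℝ := (∑ v, degw edge w v * ym v) / D with hcc
      have hymS : (fun v => ym v - cc) ∈ S := by
        rw [hmemS]
        constructor
        · have hsplit : ∑ v, degw edge w v * (ym v - cc)
              = ∑ v, degw edge w v * ym v - D * cc := by
            have hterm : ∀ v : V, degw edge w v * (ym v - cc)
                = degw edge w v * ym v - degw edge w v * cc := fun v => by ring
            rw [Finset.sum_congr rfl fun v _ => hterm v, Finset.sum_sub_distrib,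
              ← Finset.sum_mul]
          rw [hsplit, hcc, mul_div_cancel₀ _ (ne_of_gt hD0)]
          exact sub_self _
        · intro e a ha b hb
          have h := hstep e a ha b hb
          simp only [hym]
          linarith
      have hobj : ∑ v, s v * (ym v - cc) = ∑ v, s v * xs v + t0 * (∑ v, s v * d v) := by
        have h1 : ∀ v : V, s v * (ym v - cc) = s v * xs v + t0 * (s v * d v) - cc * s v := by
          intro v
          simp only [hym]
          ring
        rw [Finset.sum_congr rfl fun v _ => h1 v, Finset.sum_sub_distrib,
          Finset.sum_add_distrib, ← Finset.mul_sum, ← Finset.mul_sum, hs, mul_zero, sub_zero]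
      have hle := hmax _ hymS
      rw [hobj] at hle
      nlinarith [mul_pos ht00 hds]

end
end

section
/- Assume H is connected, every vertex lies in at least one hyperedge, ∑_{v∈V} s_v = 0, and r∈ℝ^E with r_e ≥ 0 for all e. Suppose π∈ℝ^{V↑} satisfies π_v − π_{e⁺} ≤ 0 and π_{e⁻} − π_v ≤ 0 for every incidence v∈e, π_{e⁺} − π_{e⁻} ≤ r_e for every e∈E, and ∑_{v∈V} s_v π_v = L_s(r). Then the vector x∈ℝ^V defined by x_v = π_v − (∑_{u∈V} d_u π_u)/(∑_{u∈V} d_u) lies in 𝓧₀, satisfies R_e(x) ≤ r_e for every e∈E, and ⟨s,x⟩ = L_s(r); in particular, x is an optimal solution of the support maximization problem defining L_s(r). -/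
/-!
On `V` the vector `x` is `π` shifted by the constant that makes its degree-weighted mean vanish
(the total degree is positive since every vertex lies in a hyperedge of positive weight). A shift
changes no edge range, and the range of `π` on `e` is at most `π_{e⁺} - π_{e⁻} ≤ r_e` because `π`
is squeezed between `π_{e⁻}` and `π_{e⁺}` there; since `∑ s = 0` it does not change the objective
either, so `⟨s, x⟩ = ⟨s, π⟩ = L_s(r)`.

Optimality of `x` only needs `L_s(r)` to be an honest supremum, i.e. the objective to be bounded
above on the feasible set. Fix a vertex `v₀`. Along a hyperedge path from `v₀` to `v`, a feasible
`y` changes by at most `r_e` at each step, which bounds `|y v - y v₀|` independently of `y`; and,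
again because `∑ s = 0`, `⟨s, y⟩ = ∑ s_v (y_v - y_{v₀})`.
-/

open Finset

section

variable {V : Type*} [Fintype V] [DecidableEq V] [Nonempty V]
variable {E : Type*} [Fintype E]

/-- The support value `L_s(r)`, as a supremum. -/
noncomputable def suppVal (edge : E → Finset V) (hne : ∀ e, (edge e).Nonempty)
    (w : E → ℝ) (s : V → ℝ) (r : E → ℝ) : ℝ :=
  sSup {c : ℝ | ∃ x : V → ℝ, memX0 edge w x ∧
    (∀ e, eRange edge hne x e ≤ r e) ∧ c = ∑ v, s v * x v}

end

namespace Finset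

theorem sum_mul_sub_const_of_sum_eq_zero {ι R : Type*} [CommRing R] (t : Finset ι)
    {s : ι → R} (hs : ∑ i ∈ t, s i = 0) (x : ι → R) (c : R) :
    ∑ i ∈ t, s i * (x i - c) = ∑ i ∈ t, s i * x i := by
  simp only [mul_sub, sum_sub_distrib, ← sum_mul, hs, zero_mul, sub_zero]

theorem sum_mul_sub_div_sum_eq_zero {ι K : Type*} [Field K] (t : Finset ι)
    {d : ι → K} (hd : ∑ i ∈ t, d i ≠ 0) (x : ι → K) :
    ∑ i ∈ t, d i * (x i - (∑ j ∈ t, d j * x j) / ∑ j ∈ t, d j) = 0 := by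
  simp only [mul_sub, sum_sub_distrib, ← sum_mul]
  field_simp
  ring

end Finset

theorem Fin.sum_univ_succ_sub_castSucc {M : Type*} [AddCommGroup M] (k : ℕ)
    (f : Fin (k + 1) → M) :
    ∑ i : Fin k, (f i.succ - f i.castSucc) = f (Fin.last k) - f 0 := by
  induction k with
  | zero => simp
  | succ k ih =>
    rw [Fin.sum_univ_castSucc]
    simp only [Fin.succ_castSucc]
    rw [ih (fun i => f i.castSucc)]
    simp

section

variable {V E : Type*} {edge : E → Finset V} {hne : ∀ e, (edge e).Nonempty}

theorem abs_sub_le_eRange (x : V → ℝ) {e : E} {u v : V} (hu : u ∈ edge e) (hv : v ∈ edge e) :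
    |x u - x v| ≤ eRange edge hne x e := by
  have key : ∀ a ∈ edge e, ∀ b ∈ edge e, x a - x b ≤ eRange edge hne x e := fun a ha b hb =>
    sub_le_sub (le_sup' x ha) (inf'_le x hb)
  exact abs_sub_le_iff.2 ⟨key u hu v hv, key v hv u hu⟩

theorem eRange_le_of_forall_mem {x : V → ℝ} {e : E} {a b : ℝ}
    (h : ∀ v ∈ edge e, a ≤ x v ∧ x v ≤ b) : eRange edge hne x e ≤ b - a :=
  sub_le_sub (sup'_le _ _ fun v hv => (h v hv).2) (le_inf' _ _ fun v hv => (h v hv).1)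

theorem HConn.exists_abs_sub_le (hconn : HConn edge) (r : E → ℝ) (u v : V) :
    ∃ B, ∀ x : V → ℝ, (∀ e, eRange edge hne x e ≤ r e) → |x v - x u| ≤ B := by
  obtain ⟨k, p, c, rfl, rfl, hpath⟩ := hconn u v
  refine ⟨∑ i, r (c i), fun x hx => ?_⟩
  calc |x (p (Fin.last k)) - x (p 0)|
      = |∑ i : Fin k, (x (p i.succ) - x (p i.castSucc))| :=
        congrArg abs (Fin.sum_univ_succ_sub_castSucc k (x ∘ p)).symm
    _ ≤ ∑ i, |x (p i.succ) - x (p i.castSucc)| := abs_sum_le_sum_abs _ _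
    _ ≤ ∑ i, r (c i) := sum_le_sum fun i _ =>
        (abs_sub_le_eRange x (hpath i).2 (hpath i).1).trans (hx (c i))

variable [DecidableEq V] [Fintype E] {w : E → ℝ}

theorem degw_pos (hw : ∀ e, 0 < w e) {v : V} {e : E} (he : v ∈ edge e) : 0 < degw edge w v :=
  sum_pos (fun e _ => hw e) ⟨e, mem_filter.2 ⟨mem_univ e, he⟩⟩

variable [Fintype V]

theorem HConn.le_suppVal [Nonempty V] (hconn : HConn edge) {s : V → ℝ} (hs : ∑ v, s v = 0)
    {r : E → ℝ} {y : V → ℝ} (hy0 : memX0 edge w y) (hy : ∀ e, eRange edge hne y e ≤ r e) :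
    ∑ v, s v * y v ≤ suppVal edge hne w s r := by
  obtain ⟨v₀⟩ := ‹Nonempty V›
  choose B hB using fun v => hconn.exists_abs_sub_le (hne := hne) r v₀ v
  refine le_csSup ⟨∑ v, |s v| * B v, ?_⟩ ⟨y, hy0, hy, rfl⟩
  rintro _ ⟨x, -, hx, rfl⟩
  rw [← sum_mul_sub_const_of_sum_eq_zero univ hs x (x v₀)]
  exact sum_le_sum fun v _ => (le_abs_self _).trans <| by
    rw [abs_mul]
    exact mul_le_mul_of_nonneg_left (hB v x hx) (abs_nonneg _)

end

section

variable {V : Type*} [Fintype V] [DecidableEq V] [Nonempty V]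
variable {E : Type*} [Fintype E]

theorem stmt10_general (edge : E → Finset V) (hne : ∀ e, (edge e).Nonempty)
    (w : E → ℝ) (hw : ∀ e, 0 < w e) (s : V → ℝ) (r : E → ℝ)
    (hconn : HConn edge) (hcov : ∀ v : V, ∃ e, v ∈ edge e)
    (hs : ∑ v, s v = 0)
    (piV : V → ℝ) (pip pim : E → ℝ)
    (h1 : ∀ e, ∀ v ∈ edge e, piV v - pip e ≤ 0)
    (h2 : ∀ e, ∀ v ∈ edge e, pim e - piV v ≤ 0)
    (h3 : ∀ e, pip e - pim e ≤ r e)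
    (h4 : ∑ v, s v * piV v = suppVal edge hne w s r) :
    let x : V → ℝ := fun v => piV v - (∑ u, degw edge w u * piV u) / (∑ u, degw edge w u)
    memX0 edge w x ∧
    (∀ e, eRange edge hne x e ≤ r e) ∧
    (∑ v, s v * x v = suppVal edge hne w s r) ∧
    (∀ y : V → ℝ, memX0 edge w y → (∀ e, eRange edge hne y e ≤ r e) →
      ∑ v, s v * y v ≤ ∑ v, s v * x v) := by
  intro x
  have hD : ∑ u, degw edge w u ≠ 0 :=
    (sum_pos (fun v _ => degw_pos hw (hcov v).choose_spec) univ_nonempty).ne'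
  have hval : ∑ v, s v * x v = suppVal edge hne w s r :=
    (sum_mul_sub_const_of_sum_eq_zero univ hs piV _).trans h4
  refine ⟨sum_mul_sub_div_sum_eq_zero univ hD piV, fun e => ?_, hval, fun y hy0 hy => ?_⟩
  · refine (eRange_le_of_forall_mem fun v hv =>
      ⟨sub_le_sub_right (sub_nonpos.1 (h2 e v hv)) _,
        sub_le_sub_right (sub_nonpos.1 (h1 e v hv)) _⟩).trans ?_
    exact (sub_sub_sub_cancel_right _ _ _).trans_le (h3 e)
  · exact hval ▸ hconn.le_suppVal hs hy0 hy

theorem stmt10 (edge : E → Finset V) (hne : ∀ e, (edge e).Nonempty)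
    (w : E → ℝ) (hw : ∀ e, 0 < w e) (s : V → ℝ) (r : E → ℝ)
    (hconn : HConn edge) (hcov : ∀ v : V, ∃ e, v ∈ edge e)
    (hs : ∑ v, s v = 0) (hr : ∀ e, 0 ≤ r e)
    (piV : V → ℝ) (pip pim : E → ℝ)
    (h1 : ∀ e, ∀ v ∈ edge e, piV v - pip e ≤ 0)
    (h2 : ∀ e, ∀ v ∈ edge e, pim e - piV v ≤ 0)
    (h3 : ∀ e, pip e - pim e ≤ r e)
    (h4 : ∑ v, s v * piV v = suppVal edge hne w s r) :
    let x : V → ℝ := fun v => piV v - (∑ u, degw edge w u * piV u) / (∑ u, degw edge w u)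
    memX0 edge w x ∧
    (∀ e, eRange edge hne x e ≤ r e) ∧
    (∑ v, s v * x v = suppVal edge hne w s r) ∧
    (∀ y : V → ℝ, memX0 edge w y → (∀ e, eRange edge hne y e ≤ r e) →
      ∑ v, s v * y v ≤ ∑ v, s v * x v) :=
  stmt10_general edge hne w hw s r hconn hcov hs piV pip pim h1 h2 h3 h4

end
end
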